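/- arXiv:2510.06033 — 10 statements merged into one kernel-verified Lean document; each statement's English description precedes it below -/
import Mathlib

section
/- Suppose the atomic optimality equations admit a solution (g, ĥ_1, …, ĥ_K). Then for every state s ∈ S: (i) for every deterministic joint policy σ, limsup_{T→∞} (1/T) Σ_{t=0}^{T−1} (P_σ^t r_σ)(s) ≤ g; (ii) there exists a deterministic step-dependent atomic policy μ such that lim_{T→∞} (1/T) Σ_{t=0}^{T−1} (P_μ^t r_μ)(s) = g for every s ∈ S. Consequently, for every s ∈ S, the supremum over deterministic step-dependent atomic policies μ of limsup_{T→∞} (1/T) Σ_{t=0}^{T−1} (P_μ^t r_μ)(s) equals the supremum over deterministic joint policies σ of limsup_{T→∞} (1/T) Σ_{t=0}^{T−1} (P_σ^t r_σ)(s), and both equal g (Theorem 1: the optimal long-run average reward of step-dependent atomic policies equals that of the original joint policies). -/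
open Filter Finset Matrix

/-- The state reached after `n` atomic steps following the action sequence `a` from `s`. -/
def rollSeq {S A : Type*} (T : S → A → S) (s : S) (a : ℕ → A) : ℕ → S
  | 0 => s
  | n + 1 => T (rollSeq T s a n) (a n)

/-- The first `K` entries of the action sequence `a` form a feasible atomic sequence at `s`. -/
def FeasibleSeq {S A : Type*} (T : S → A → S) (As : S → Finset A) (K : ℕ) (s : S)
    (a : ℕ → A) : Prop :=
  ∀ k, k < K → a k ∈ As (rollSeq T s a k)

/-- Post-decision state of an atomic sequence. -/
def postState {S A : Type*} (T : S → A → S) (K : ℕ) (s : S) (a : ℕ → A) : S :=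
  rollSeq T s a K

/-- Reward of an atomic sequence. -/
def seqReward {S A : Type*} (T : S → A → S) (rhat : A → ℝ) (rH : S → ℝ) (K : ℕ) (s : S)
    (a : ℕ → A) : ℝ :=
  (∑ k ∈ Finset.range K, rhat (a k)) + rH (rollSeq T s a K)

/-- A row-stochastic matrix. -/
def RowStochastic {S : Type*} [Fintype S] (P : Matrix S S ℝ) : Prop :=
  (∀ s s', 0 ≤ P s s') ∧ ∀ s, ∑ s', P s s' = 1

/-- Transition matrix of a deterministic joint policy. -/
def jointP {S A : Type*} (T : S → A → S) (Psys : Matrix S S ℝ) (K : ℕ) (σ : S → ℕ → A) :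
    Matrix S S ℝ :=
  Matrix.of fun s s' => Psys (postState T K s (σ s)) s'

/-- Per-period reward vector of a deterministic joint policy. -/
def jointR {S A : Type*} (T : S → A → S) (rhat : A → ℝ) (rH : S → ℝ) (K : ℕ)
    (σ : S → ℕ → A) (s : S) : ℝ :=
  seqReward T rhat rH K s (σ s)

/-- Rollout states of a step-dependent atomic policy. -/
def rollDep {S A : Type*} (T : S → A → S) (μ : ℕ → S → A) (s : S) : ℕ → S
  | 0 => s
  | n + 1 => T (rollDep T μ s n) (μ n (rollDep T μ s n))

/-- Transition matrix of a deterministic step-dependent atomic policy. -/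
def depP {S A : Type*} (T : S → A → S) (Psys : Matrix S S ℝ) (K : ℕ) (μ : ℕ → S → A) :
    Matrix S S ℝ :=
  Matrix.of fun s s' => Psys (rollDep T μ s K) s'

/-- Per-period reward vector of a deterministic step-dependent atomic policy. -/
def depR {S A : Type*} (T : S → A → S) (rhat : A → ℝ) (rH : S → ℝ) (K : ℕ)
    (μ : ℕ → S → A) (s : S) : ℝ :=
  (∑ k ∈ Finset.range K, rhat (μ k (rollDep T μ s k))) + rH (rollDep T μ s K)

/-- Transition matrix of a deterministic step-independent atomic policy. -/
def indP {S A : Type*} (T : S → A → S) (Psys : Matrix S S ℝ) (K : ℕ) (pol : S → A) :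
    Matrix S S ℝ :=
  depP T Psys K fun _ => pol

/-- Per-period reward vector of a deterministic step-independent atomic policy. -/
def indR {S A : Type*} (T : S → A → S) (rhat : A → ℝ) (rH : S → ℝ) (K : ℕ)
    (pol : S → A) (s : S) : ℝ :=
  depR T rhat rH K (fun _ => pol) s

/-- `n`-horizon average reward from state `s` under transition matrix `P` and reward `r`. -/
noncomputable def avgRew {S : Type*} [Fintype S] [DecidableEq S] (P : Matrix S S ℝ)
    (r : S → ℝ) (s : S) (n : ℕ) : ℝ :=
  (n : ℝ)⁻¹ * ∑ t ∈ Finset.range n, ((P ^ t) *ᵥ r) s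

/-- The joint optimality equation for `(g, h)`. -/
def JointOptEq {S A : Type*} [Fintype S] (T : S → A → S) (As : S → Finset A) (rhat : A → ℝ)
    (rH : S → ℝ) (Psys : Matrix S S ℝ) (K : ℕ) (g : ℝ) (h : S → ℝ) : Prop :=
  ∀ s, IsGreatest {x : ℝ | ∃ a : ℕ → A, FeasibleSeq T As K s a ∧
    x = seqReward T rhat rH K s a - g + ∑ s', Psys (postState T K s a) s' * h s'} (h s)

/-- The atomic optimality equations, with atomic steps indexed `0, …, K-1`. -/
def AtomicOptEq {S A : Type*} [Fintype S] (T : S → A → S) (As : S → Finset A) (rhat : A → ℝ)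
    (rH : S → ℝ) (Psys : Matrix S S ℝ) (K : ℕ) (g : ℝ) (hhat : ℕ → S → ℝ) : Prop :=
  (∀ k, k + 1 < K → ∀ s, IsGreatest
      {x : ℝ | ∃ a ∈ As s, x = rhat a - g / (K : ℝ) + hhat (k + 1) (T s a)} (hhat k s)) ∧
  ∀ s, IsGreatest
      {x : ℝ | ∃ a ∈ As s,
        x = rhat a - g / (K : ℝ) + rH (T s a) + ∑ s', Psys (T s a) s' * hhat 0 s'}
      (hhat (K - 1) s)

/-- The passing structure: a distinguished passing action and an idle count. -/
def PassingStruct {S A : Type*} (T : S → A → S) (As : S → Finset A) (rhat : A → ℝ) (K : ℕ)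
    (pass : A) (ι : S → ℕ) : Prop :=
  (∀ s, pass ∈ As s) ∧ (∀ s, T s pass = s) ∧ rhat pass = 0 ∧ (∀ s, ι s ≤ K) ∧
  (∀ s, ∀ a ∈ As s, a ≠ pass → 1 ≤ ι s ∧ ι (T s a) = ι s - 1) ∧
  ∀ s, ι s = 0 → As s = {pass}

/-- The passing-last equation of `h̃` relative to `(g, h)`. -/
def PassLastEq {S A : Type*} [Fintype S] [DecidableEq A] (T : S → A → S) (As : S → Finset A)
    (rhat : A → ℝ) (rH : S → ℝ) (Psys : Matrix S S ℝ) (pass : A) (g : ℝ)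
    (h htil : S → ℝ) : Prop :=
  ∀ s, IsGreatest {x : ℝ | ∃ a ∈ As s,
    x = if a = pass then rH s - g + ∑ s', Psys s s' * h s'
        else rhat a + htil (T s a)} (htil s)


section AuxStmt0
set_option linter.unusedSectionVars false
set_option maxHeartbeats 1000000

variable {S : Type*} [Fintype S] [DecidableEq S] [Nonempty S]

lemma rs_pow {P : Matrix S S ℝ} (hP : RowStochastic P) (n : ℕ) : RowStochastic (P ^ n) := by
  induction n with
  | zero =>
    constructor
    · intro s s'; simp [Matrix.one_apply]; positivity
    · intro s; simp [Matrix.one_apply]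
  | succ n ih =>
    rw [pow_succ]
    constructor
    · intro s s'
      rw [Matrix.mul_apply]
      exact Finset.sum_nonneg fun u _ => mul_nonneg (ih.1 s u) (hP.1 u s')
    · intro s
      simp only [Matrix.mul_apply]
      rw [Finset.sum_comm]
      simp only [← Finset.mul_sum, hP.2]
      simpa using ih.2 s

lemma abs_mulVec_le {P : Matrix S S ℝ} (hP : RowStochastic P) {h : S → ℝ} {M : ℝ}
    (hM : ∀ s, |h s| ≤ M) (s : S) : |(P *ᵥ h) s| ≤ M := by
  have h1 : |(P *ᵥ h) s| ≤ ∑ u, P s u * |h u| := by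
    refine (Finset.abs_sum_le_sum_abs _ _).trans ?_
    refine Finset.sum_le_sum fun u _ => ?_
    rw [abs_mul, abs_of_nonneg (hP.1 s u)]
  refine h1.trans ?_
  calc ∑ u, P s u * |h u| ≤ ∑ u, P s u * M :=
        Finset.sum_le_sum fun u _ => mul_le_mul_of_nonneg_left (hM u) (hP.1 s u)
    _ = M := by rw [← Finset.sum_mul, hP.2, one_mul]

lemma pow_succ_mulVec (P : Matrix S S ℝ) (v : S → ℝ) (n : ℕ) (s : S) :
    ((P ^ (n+1)) *ᵥ v) s = ∑ u, P s u * ((P ^ n) *ᵥ v) u := by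
  rw [pow_succ', ← Matrix.mulVec_mulVec]
  simp [Matrix.mulVec, dotProduct]

lemma affine_mulVec {P : Matrix S S ℝ} (hP : RowStochastic P) (h w : S → ℝ) (c : ℝ) (s : S) :
    ∑ u, P s u * (c + h u - w u) = c + (P *ᵥ h) s - (P *ᵥ w) s := by
  have h1 : ∑ u, P s u * c = c := by rw [← Finset.sum_mul, hP.2, one_mul]
  simp only [mul_sub, mul_add, Finset.sum_sub_distrib, Finset.sum_add_distrib, h1]
  simp [Matrix.mulVec, dotProduct]

lemma sum_decomp (P : Matrix S S ℝ) (r : S → ℝ) (n : ℕ) (s : S) :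
    ∑ t ∈ Finset.range (n+1), ((P ^ t) *ᵥ r) s
      = (∑ u, P s u * ∑ t ∈ Finset.range n, ((P ^ t) *ᵥ r) u) + r s := by
  rw [Finset.sum_range_succ']
  congr 1
  · calc ∑ t ∈ Finset.range n, ((P ^ (t+1)) *ᵥ r) s
        = ∑ t ∈ Finset.range n, ∑ u, P s u * ((P ^ t) *ᵥ r) u :=
          Finset.sum_congr rfl fun t _ => pow_succ_mulVec P r t s
      _ = ∑ u, ∑ t ∈ Finset.range n, P s u * ((P ^ t) *ᵥ r) u := Finset.sum_comm
      _ = ∑ u, P s u * ∑ t ∈ Finset.range n, ((P ^ t) *ᵥ r) u := by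
          simp [Finset.mul_sum]
  · simp [Matrix.one_mulVec]

lemma sum_pow_le {P : Matrix S S ℝ} (hP : RowStochastic P) {r h : S → ℝ} {g : ℝ}
    (hle : ∀ s, r s + (P *ᵥ h) s ≤ g + h s) (n : ℕ) (s : S) :
    ∑ t ∈ Finset.range n, ((P ^ t) *ᵥ r) s ≤ n * g + h s - ((P ^ n) *ᵥ h) s := by
  induction n generalizing s with
  | zero => simp
  | succ n ih =>
    rw [sum_decomp]
    have h2 : ∑ u, P s u * ∑ t ∈ Finset.range n, ((P ^ t) *ᵥ r) u
        ≤ ∑ u, P s u * ((n : ℝ) * g + h u - ((P ^ n) *ᵥ h) u) :=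
      Finset.sum_le_sum fun u _ => mul_le_mul_of_nonneg_left (ih u) (hP.1 s u)
    rw [affine_mulVec hP h ((P ^ n) *ᵥ h) ((n : ℝ) * g) s] at h2
    have h3 : (P *ᵥ ((P ^ n) *ᵥ h)) s = ((P ^ (n+1)) *ᵥ h) s := by
      rw [Matrix.mulVec_mulVec, ← pow_succ']
    have h4 := hle s
    push_cast
    rw [h3] at h2
    linarith

lemma sum_pow_eq {P : Matrix S S ℝ} (hP : RowStochastic P) {r h : S → ℝ} {g : ℝ}
    (heq : ∀ s, r s + (P *ᵥ h) s = g + h s) (n : ℕ) (s : S) :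
    ∑ t ∈ Finset.range n, ((P ^ t) *ᵥ r) s = n * g + h s - ((P ^ n) *ᵥ h) s := by
  induction n generalizing s with
  | zero => simp
  | succ n ih =>
    rw [sum_decomp]
    have h2 : ∑ u, P s u * ∑ t ∈ Finset.range n, ((P ^ t) *ᵥ r) u
        = ∑ u, P s u * ((n : ℝ) * g + h u - ((P ^ n) *ᵥ h) u) :=
      Finset.sum_congr rfl fun u _ => by rw [ih u]
    rw [affine_mulVec hP h ((P ^ n) *ᵥ h) ((n : ℝ) * g) s] at h2
    have h3 : (P *ᵥ ((P ^ n) *ᵥ h)) s = ((P ^ (n+1)) *ᵥ h) s := by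
      rw [Matrix.mulVec_mulVec, ← pow_succ']
    have h4 := heq s
    push_cast
    rw [h3] at h2
    linarith

lemma hbound (h : S → ℝ) : ∀ s, |h s| ≤ ∑ u, |h u| := fun s =>
  Finset.single_le_sum (fun u _ => abs_nonneg (h u)) (Finset.mem_univ s)

lemma limsup_avg_le {P : Matrix S S ℝ} (hP : RowStochastic P) {r h : S → ℝ} {g : ℝ}
    (hle : ∀ s, r s + (P *ᵥ h) s ≤ g + h s) (s : S) :
    Filter.limsup (avgRew P r s) Filter.atTop ≤ g := by
  set M : ℝ := ∑ u, |h u| with hMdef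
  have hM : ∀ u, |h u| ≤ M := hbound h
  have hM0 : 0 ≤ M := (abs_nonneg _).trans (hM (Classical.arbitrary S))
  set R : ℝ := ∑ u, |r u| with hRdef
  have hR : ∀ u, |r u| ≤ R := hbound r
  have hR0 : 0 ≤ R := (abs_nonneg _).trans (hR (Classical.arbitrary S))
  have hlow : ∀ n, -R ≤ avgRew P r s n := by
    intro n
    rcases Nat.eq_zero_or_pos n with hn | hn
    · subst hn; simp [avgRew]; linarith
    · have hsum : -((n : ℝ) * R) ≤ ∑ t ∈ Finset.range n, ((P ^ t) *ᵥ r) s := by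
        calc -((n : ℝ) * R) = ∑ _t ∈ Finset.range n, (-R) := by
              simp [mul_comm]
          _ ≤ _ := Finset.sum_le_sum fun t _ =>
              neg_le_of_abs_le (abs_mulVec_le (rs_pow hP t) hR s)
      have hn' : (0 : ℝ) < (n : ℝ) := by exact_mod_cast hn
      have := mul_le_mul_of_nonneg_left hsum (inv_nonneg.2 hn'.le)
      calc -R = (n : ℝ)⁻¹ * (-((n:ℝ) * R)) := by field_simp
        _ ≤ avgRew P r s n := this
  have hup : ∀ n, 1 ≤ n → avgRew P r s n ≤ g + 2 * M / n := by
    intro n hn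
    have hn' : (0 : ℝ) < (n : ℝ) := by exact_mod_cast hn
    have h1 : ∑ t ∈ Finset.range n, ((P ^ t) *ᵥ r) s ≤ (n : ℝ) * g + 2 * M := by
      have := sum_pow_le hP hle n s
      have h2 : |((P ^ n) *ᵥ h) s| ≤ M := abs_mulVec_le (rs_pow hP n) hM s
      have h3 := abs_le.1 h2
      have h4 := abs_le.1 (hM s)
      linarith
    have := mul_le_mul_of_nonneg_left h1 (inv_nonneg.2 hn'.le)
    calc avgRew P r s n ≤ (n : ℝ)⁻¹ * ((n : ℝ) * g + 2 * M) := this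
      _ = g + 2 * M / n := by field_simp
  have hv : Filter.Tendsto (fun n : ℕ => g + 2 * M / n) Filter.atTop (nhds g) := by
    have := tendsto_const_div_atTop_nhds_zero_nat (2 * M)
    simpa using tendsto_const_nhds.add this
  have hls : Filter.limsup (avgRew P r s) Filter.atTop
      ≤ Filter.limsup (fun n : ℕ => g + 2 * M / n) Filter.atTop := by
    refine Filter.limsup_le_limsup ?_ ?_ ?_
    · filter_upwards [Filter.eventually_ge_atTop 1] with n hn
      exact hup n hn
    · exact Filter.isCoboundedUnder_le_of_le Filter.atTop hlow
    · refine Filter.isBoundedUnder_of ⟨g + 2 * M, fun n => ?_⟩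
      rcases Nat.eq_zero_or_pos n with hn | hn
      · subst hn; simp; linarith
      · have hn' : (1 : ℝ) ≤ (n : ℝ) := by exact_mod_cast hn
        have : 2 * M / (n : ℝ) ≤ 2 * M := by
          apply div_le_self (by linarith) hn'
        linarith
  rw [hv.limsup_eq] at hls
  exact hls

lemma tendsto_avg {P : Matrix S S ℝ} (hP : RowStochastic P) {r h : S → ℝ} {g : ℝ}
    (heq : ∀ s, r s + (P *ᵥ h) s = g + h s) (s : S) :
    Filter.Tendsto (avgRew P r s) Filter.atTop (nhds g) := by
  set M : ℝ := ∑ u, |h u| with hMdef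
  have hM : ∀ u, |h u| ≤ M := hbound h
  have hv : Filter.Tendsto (fun n : ℕ => g + 2 * M / n) Filter.atTop (nhds g) := by
    have := tendsto_const_div_atTop_nhds_zero_nat (2 * M)
    simpa using tendsto_const_nhds.add this
  have hv' : Filter.Tendsto (fun n : ℕ => g - 2 * M / n) Filter.atTop (nhds g) := by
    have := tendsto_const_div_atTop_nhds_zero_nat (2 * M)
    simpa using tendsto_const_nhds.sub this
  have key : ∀ n : ℕ, 1 ≤ n → avgRew P r s n
      = g + (h s - ((P ^ n) *ᵥ h) s) / n := by
    intro n hn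
    have hn' : (0 : ℝ) < (n : ℝ) := by exact_mod_cast hn
    rw [avgRew, sum_pow_eq hP heq n s]
    field_simp
    ring
  refine tendsto_of_tendsto_of_tendsto_of_le_of_le' hv' hv ?_ ?_
  · filter_upwards [Filter.eventually_ge_atTop 1] with n hn
    have hn' : (0 : ℝ) < (n : ℝ) := by exact_mod_cast hn
    have h2 := abs_le.1 (abs_mulVec_le (rs_pow hP n) hM s)
    have h3 := abs_le.1 (hM s)
    rw [key n hn]
    have h6 : (-(2*M)) / (n:ℝ) ≤ (h s - ((P ^ n) *ᵥ h) s) / n :=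
      (div_le_div_iff_of_pos_right hn').2 (by linarith)
    rw [neg_div] at h6
    linarith
  · filter_upwards [Filter.eventually_ge_atTop 1] with n hn
    have hn' : (0 : ℝ) < (n : ℝ) := by exact_mod_cast hn
    have h2 := abs_le.1 (abs_mulVec_le (rs_pow hP n) hM s)
    have h3 := abs_le.1 (hM s)
    rw [key n hn]
    have h6 : (h s - ((P ^ n) *ᵥ h) s) / n ≤ (2*M) / (n:ℝ) :=
      (div_le_div_iff_of_pos_right hn').2 (by linarith)
    linarith

end AuxStmt0

section AuxRoll
set_option linter.unusedSectionVars false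
variable {S A : Type*}

lemma rollSeq_shift (T : S → A → S) (s : S) (a : ℕ → A) (n : ℕ) :
    rollSeq T s a (n + 1) = rollSeq T (T s (a 0)) (fun k => a (k + 1)) n := by
  induction n with
  | zero => rfl
  | succ n ih => rw [rollSeq, ih]; rfl

lemma rollDep_shift (T : S → A → S) (μ : ℕ → S → A) (s : S) (n : ℕ) :
    rollDep T μ s (n + 1) = rollDep T (fun k => μ (k + 1)) (T s (μ 0 s)) n := by
  induction n with
  | zero => rfl
  | succ n ih => rw [rollDep, ih]; rfl

lemma rollSeq_eq_rollDep (T : S → A → S) (μ : ℕ → S → A) (u : S) (n : ℕ) :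
    rollSeq T u (fun k => μ k (rollDep T μ u k)) n = rollDep T μ u n := by
  induction n with
  | zero => rfl
  | succ n ih => rw [rollSeq, rollDep, ih]

end AuxRoll

section AuxOpt
set_option linter.unusedSectionVars false
set_option maxHeartbeats 1000000
variable {S A : Type*} [Fintype S]

lemma seq_tail_le (T : S → A → S) (As : S → Finset A) (rhat : A → ℝ) (rH : S → ℝ)
    (Psys : Matrix S S ℝ) (K : ℕ) (g : ℝ) (hhat : ℕ → S → ℝ)
    (hopt : AtomicOptEq T As rhat rH Psys K g hhat) :
    ∀ d, 1 ≤ d → d ≤ K → ∀ (s : S) (a : ℕ → A),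
      (∀ k, k < d → a k ∈ As (rollSeq T s a k)) →
      (∑ k ∈ Finset.range d, rhat (a k)) - d * (g / K) + rH (rollSeq T s a d)
        + ∑ s', Psys (rollSeq T s a d) s' * hhat 0 s' ≤ hhat (K - d) s := by
  intro d hd
  induction d, hd using Nat.le_induction with
  | base =>
    intro h1K s a hfeas
    have hx := (hopt.2 s).2 ⟨a 0, hfeas 0 Nat.one_pos, rfl⟩
    have hr : rollSeq T s a 1 = T s (a 0) := rfl
    rw [hr]
    simp only [Finset.sum_range_one, Nat.cast_one, one_mul]
    linarith
  | succ d hd ih =>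
    intro hdK s a hfeas
    have hshift : ∀ n, rollSeq T s a (n + 1)
        = rollSeq T (T s (a 0)) (fun k => a (k + 1)) n := rollSeq_shift T s a
    have hb : ∀ k, k < d → a (k + 1) ∈ As (rollSeq T (T s (a 0)) (fun k => a (k + 1)) k) := by
      intro k hk
      have := hfeas (k + 1) (by omega)
      rwa [hshift k] at this
    have hih := ih (by omega) (T s (a 0)) (fun k => a (k + 1)) hb
    have hk0 : (K - (d + 1)) + 1 < K := by omega
    have hx := (hopt.1 (K - (d + 1)) hk0 s).2 ⟨a 0, hfeas 0 (by omega), rfl⟩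
    have he : K - (d + 1) + 1 = K - d := by omega
    rw [he] at hx
    have hsum : ∑ k ∈ Finset.range (d + 1), rhat (a k)
        = (∑ k ∈ Finset.range d, rhat (a (k + 1))) + rhat (a 0) :=
      Finset.sum_range_succ' _ d
    rw [hsum, hshift d]
    push_cast
    linarith

noncomputable def greedyPol (T : S → A → S) (As : S → Finset A) (hAs : ∀ s, (As s).Nonempty)
    (rhat : A → ℝ) (rH : S → ℝ) (Psys : Matrix S S ℝ) (K : ℕ) (g : ℝ) (hhat : ℕ → S → ℝ)
    (hopt : AtomicOptEq T As rhat rH Psys K g hhat) : ℕ → S → A :=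
  fun k s =>
    if hk : k + 1 < K then Classical.choose (hopt.1 k hk s).1
    else if k = K - 1 then Classical.choose (hopt.2 s).1
    else Classical.choose (hAs s)

lemma greedyPol_mem (T : S → A → S) (As : S → Finset A) (hAs : ∀ s, (As s).Nonempty)
    (rhat : A → ℝ) (rH : S → ℝ) (Psys : Matrix S S ℝ) (K : ℕ) (g : ℝ) (hhat : ℕ → S → ℝ)
    (hopt : AtomicOptEq T As rhat rH Psys K g hhat) (k : ℕ) (u : S) :
    greedyPol T As hAs rhat rH Psys K g hhat hopt k u ∈ As u := by
  unfold greedyPol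
  split_ifs with h1 h2
  · exact (Classical.choose_spec (hopt.1 k h1 u).1).1
  · exact (Classical.choose_spec (hopt.2 u).1).1
  · exact Classical.choose_spec (hAs u)

lemma greedyPol_eq1 (T : S → A → S) (As : S → Finset A) (hAs : ∀ s, (As s).Nonempty)
    (rhat : A → ℝ) (rH : S → ℝ) (Psys : Matrix S S ℝ) (K : ℕ) (g : ℝ) (hhat : ℕ → S → ℝ)
    (hopt : AtomicOptEq T As rhat rH Psys K g hhat) (k : ℕ) (hk : k + 1 < K) (u : S) :
    hhat k u = rhat (greedyPol T As hAs rhat rH Psys K g hhat hopt k u) - g / K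
      + hhat (k + 1) (T u (greedyPol T As hAs rhat rH Psys K g hhat hopt k u)) := by
  unfold greedyPol
  rw [dif_pos hk]
  exact (Classical.choose_spec (hopt.1 k hk u).1).2

lemma greedyPol_eq2 (T : S → A → S) (As : S → Finset A) (hAs : ∀ s, (As s).Nonempty)
    (rhat : A → ℝ) (rH : S → ℝ) (Psys : Matrix S S ℝ) (K : ℕ) (g : ℝ) (hhat : ℕ → S → ℝ)
    (hopt : AtomicOptEq T As rhat rH Psys K g hhat) (hK : 1 ≤ K) (u : S) :
    hhat (K - 1) u = rhat (greedyPol T As hAs rhat rH Psys K g hhat hopt (K - 1) u) - g / K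
      + rH (T u (greedyPol T As hAs rhat rH Psys K g hhat hopt (K - 1) u))
      + ∑ s', Psys (T u (greedyPol T As hAs rhat rH Psys K g hhat hopt (K - 1) u)) s'
          * hhat 0 s' := by
  unfold greedyPol
  rw [dif_neg (by omega), if_pos rfl]
  exact (Classical.choose_spec (hopt.2 u).1).2

lemma greedy_eq (T : S → A → S) (rhat : A → ℝ) (rH : S → ℝ)
    (Psys : Matrix S S ℝ) (K : ℕ) (g : ℝ) (hhat : ℕ → S → ℝ) (hK : 1 ≤ K)
    (μ : ℕ → S → A)
    (hμ1 : ∀ k, k + 1 < K → ∀ u, hhat k u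
      = rhat (μ k u) - g / K + hhat (k + 1) (T u (μ k u)))
    (hμ2 : ∀ u, hhat (K - 1) u = rhat (μ (K - 1) u) - g / K + rH (T u (μ (K - 1) u))
      + ∑ s', Psys (T u (μ (K - 1) u)) s' * hhat 0 s') :
    ∀ d, 1 ≤ d → d ≤ K → ∀ s : S,
      (∑ k ∈ Finset.range d, rhat (μ (K - d + k) (rollDep T (fun j => μ (K - d + j)) s k)))
        - d * (g / K) + rH (rollDep T (fun j => μ (K - d + j)) s d)
        + ∑ s', Psys (rollDep T (fun j => μ (K - d + j)) s d) s' * hhat 0 s'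
      = hhat (K - d) s := by
  intro d hd
  induction d, hd using Nat.le_induction with
  | base =>
    intro h1K s
    have h2 := hμ2 s
    have e1 : rollDep T (fun j => μ (K - 1 + j)) s 1 = T s (μ (K - 1) s) := rfl
    have e2 : μ (K - 1 + 0) (rollDep T (fun j => μ (K - 1 + j)) s 0) = μ (K - 1) s := rfl
    rw [e1]
    simp only [Finset.sum_range_one, Nat.cast_one, one_mul, e2]
    linarith
  | succ d hd ih =>
    intro hdK s
    have hidx : ∀ j, K - (d + 1) + (j + 1) = K - d + j := fun j => by omega
    have hfun : (fun j => μ (K - (d + 1) + (j + 1))) = (fun j => μ (K - d + j)) := by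
      funext j
      rw [hidx j]
    have hshift : ∀ n, rollDep T (fun j => μ (K - (d + 1) + j)) s (n + 1)
        = rollDep T (fun j => μ (K - d + j))
            (T s (μ (K - (d + 1)) s)) n := by
      intro n
      rw [rollDep_shift T _ s n]
      rw [hfun]
      rfl
    have hih := ih (by omega) (T s (μ (K - (d + 1)) s))
    have hx := hμ1 (K - (d + 1)) (by omega) s
    have he : K - (d + 1) + 1 = K - d := by omega
    rw [he] at hx
    have hsum : ∑ k ∈ Finset.range (d + 1),
          rhat (μ (K - (d + 1) + k) (rollDep T (fun j => μ (K - (d + 1) + j)) s k))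
        = (∑ k ∈ Finset.range d, rhat (μ (K - d + k)
            (rollDep T (fun j => μ (K - d + j)) (T s (μ (K - (d + 1)) s)) k)))
          + rhat (μ (K - (d + 1)) s) := by
      rw [Finset.sum_range_succ']
      have hterm : ∀ k ∈ Finset.range d,
          rhat (μ (K - (d + 1) + (k + 1))
            (rollDep T (fun j => μ (K - (d + 1) + j)) s (k + 1)))
          = rhat (μ (K - d + k)
            (rollDep T (fun j => μ (K - d + j)) (T s (μ (K - (d + 1)) s)) k)) := by
        intro k _
        rw [hshift k, hidx k]
      rw [Finset.sum_congr rfl hterm]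
      rfl
    rw [hsum, hshift d]
    push_cast
    linarith

end AuxOpt

set_option maxHeartbeats 1000000 in
/-- **Theorem 1** (atomic action decomposition, step-dependent policies): if the atomic
optimality equations admit a solution `(g, ĥ)`, then every deterministic joint policy has
long-run average reward at most `g`, some deterministic step-dependent atomic policy attains
`g`, and the optimal long-run average rewards of step-dependent atomic policies and of joint
policies coincide and equal `g`. -/
theorem stmt0 {S A : Type*} [Fintype S] [DecidableEq S] [Nonempty S] [Fintype A]
    (T : S → A → S) (As : S → Finset A) (hAs : ∀ s, (As s).Nonempty)
    (rhat : A → ℝ) (rH : S → ℝ) (Psys : Matrix S S ℝ) (hPsys : RowStochastic Psys)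
    (K : ℕ) (hK : 1 ≤ K) (g : ℝ) (hhat : ℕ → S → ℝ)
    (hopt : AtomicOptEq T As rhat rH Psys K g hhat) :
    ∀ s : S,
      (∀ σ : S → ℕ → A, (∀ u, FeasibleSeq T As K u (σ u)) →
        Filter.limsup (avgRew (jointP T Psys K σ) (jointR T rhat rH K σ) s)
          Filter.atTop ≤ g) ∧
      (∃ μ : ℕ → S → A, (∀ k, k < K → ∀ u, μ k u ∈ As u) ∧
        ∀ u, Filter.Tendsto (avgRew (depP T Psys K μ) (depR T rhat rH K μ) u)
          Filter.atTop (nhds g)) ∧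
      sSup {x : ℝ | ∃ μ : ℕ → S → A, (∀ k, k < K → ∀ u, μ k u ∈ As u) ∧
          x = Filter.limsup (avgRew (depP T Psys K μ) (depR T rhat rH K μ) s)
            Filter.atTop} = g ∧
      sSup {x : ℝ | ∃ σ : S → ℕ → A, (∀ u, FeasibleSeq T As K u (σ u)) ∧
          x = Filter.limsup (avgRew (jointP T Psys K σ) (jointR T rhat rH K σ) s)
            Filter.atTop} = g := by
  classical
  have hKne : (K : ℝ) ≠ 0 := Nat.cast_ne_zero.2 (by omega)
  have hKg : (K : ℝ) * (g / K) = g := by field_simp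
  have hjrs : ∀ σ : S → ℕ → A, RowStochastic (jointP T Psys K σ) :=
    fun σ => ⟨fun u v => hPsys.1 _ _, fun u => hPsys.2 _⟩
  have hdrs : ∀ μ : ℕ → S → A, RowStochastic (depP T Psys K μ) :=
    fun μ => ⟨fun u v => hPsys.1 _ _, fun u => hPsys.2 _⟩
  have hjle : ∀ σ : S → ℕ → A, (∀ u, FeasibleSeq T As K u (σ u)) →
      ∀ u, jointR T rhat rH K σ u + ((jointP T Psys K σ) *ᵥ hhat 0) u ≤ g + hhat 0 u := by
    intro σ hσ u
    have hseq := seq_tail_le T As rhat rH Psys K g hhat hopt K hK le_rfl u (σ u) (hσ u)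
    rw [Nat.sub_self] at hseq
    have hmv : ((jointP T Psys K σ) *ᵥ hhat 0) u
        = ∑ s', Psys (rollSeq T u (σ u) K) s' * hhat 0 s' := by
      simp [jointP, postState, Matrix.mulVec, dotProduct]
    rw [hmv]
    simp only [jointR, seqReward]
    linarith
  have hjls : ∀ σ : S → ℕ → A, (∀ u, FeasibleSeq T As K u (σ u)) → ∀ u,
      Filter.limsup (avgRew (jointP T Psys K σ) (jointR T rhat rH K σ) u) Filter.atTop ≤ g :=
    fun σ hσ u => limsup_avg_le (hjrs σ) (hjle σ hσ) u
  set μ0 : ℕ → S → A := greedyPol T As hAs rhat rH Psys K g hhat hopt with hμ0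
  have hmem : ∀ k u, μ0 k u ∈ As u := greedyPol_mem T As hAs rhat rH Psys K g hhat hopt
  have heq : ∀ u, depR T rhat rH K μ0 u + ((depP T Psys K μ0) *ᵥ hhat 0) u
      = g + hhat 0 u := by
    intro u
    have hge2 := greedy_eq T rhat rH Psys K g hhat hK μ0
      (greedyPol_eq1 T As hAs rhat rH Psys K g hhat hopt)
      (greedyPol_eq2 T As hAs rhat rH Psys K g hhat hopt hK)
      K hK le_rfl u
    simp only [Nat.sub_self, zero_add] at hge2
    have hmv : ((depP T Psys K μ0) *ᵥ hhat 0) u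
        = ∑ s', Psys (rollDep T μ0 u K) s' * hhat 0 s' := by
      simp [depP, Matrix.mulVec, dotProduct]
    rw [hmv]
    simp only [depR]
    linarith
  have htend : ∀ u, Filter.Tendsto
      (avgRew (depP T Psys K μ0) (depR T rhat rH K μ0) u) Filter.atTop (nhds g) :=
    fun u => tendsto_avg (hdrs μ0) heq u
  have hconv : ∀ μ : ℕ → S → A, (∀ k, k < K → ∀ u, μ k u ∈ As u) →
      ∃ σ : S → ℕ → A, (∀ u, FeasibleSeq T As K u (σ u)) ∧
        jointP T Psys K σ = depP T Psys K μ ∧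
        jointR T rhat rH K σ = depR T rhat rH K μ := by
    intro μ hmemμ
    refine ⟨fun u k => μ k (rollDep T μ u k), ?_, ?_, ?_⟩
    · intro u k hk
      show μ k (rollDep T μ u k) ∈ As (rollSeq T u (fun k => μ k (rollDep T μ u k)) k)
      rw [rollSeq_eq_rollDep]
      exact hmemμ k hk _
    · ext u v
      show Psys (postState T K u fun k => μ k (rollDep T μ u k)) v
        = Psys (rollDep T μ u K) v
      rw [postState, rollSeq_eq_rollDep]
    · funext u
      show seqReward T rhat rH K u (fun k => μ k (rollDep T μ u k))
        = depR T rhat rH K μ u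
      rw [seqReward, depR, rollSeq_eq_rollDep]
  have hdep_le : ∀ μ : ℕ → S → A, (∀ k, k < K → ∀ u, μ k u ∈ As u) → ∀ u,
      Filter.limsup (avgRew (depP T Psys K μ) (depR T rhat rH K μ) u) Filter.atTop ≤ g := by
    intro μ hmemμ u
    obtain ⟨σ, hfe, hP, hR⟩ := hconv μ hmemμ
    rw [← hP, ← hR]
    exact hjls σ hfe u
  intro s
  refine ⟨fun σ hσ => hjls σ hσ s, ⟨μ0, fun k _ u => hmem k u, htend⟩, ?_, ?_⟩
  · apply IsGreatest.csSup_eq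
    constructor
    · exact ⟨μ0, fun k _ u => hmem k u, ((htend s).limsup_eq).symm⟩
    · rintro x ⟨μ, hmemμ, rfl⟩
      exact hdep_le μ hmemμ s
  · apply IsGreatest.csSup_eq
    constructor
    · obtain ⟨σ, hfe, hP, hR⟩ := hconv μ0 (fun k _ u => hmem k u)
      refine ⟨σ, hfe, ?_⟩
      rw [hP, hR]
      exact ((htend s).limsup_eq).symm
    · rintro x ⟨σ, hσ, rfl⟩
      exact hjls σ hσ s
end

section
/- Assume the passing structure and suppose the joint optimality equation admits a solution (g, h). Then for every state s ∈ S: (i) for every deterministic step-independent atomic policy π̃, limsup_{T→∞} (1/T) Σ_{t=0}^{T−1} (P_π̃^t r_π̃)(s) ≤ g; (ii) there exists a deterministic step-independent atomic policy π̃* such that lim_{T→∞} (1/T) Σ_{t=0}^{T−1} (P_{π̃*}^t r_{π̃*})(s) = g for every s ∈ S; and (iii) for every deterministic joint policy σ, limsup_{T→∞} (1/T) Σ_{t=0}^{T−1} (P_σ^t r_σ)(s) ≤ g, with equality (as a limit) for some deterministic joint policy. Consequently, the supremum of long-run average rewards over deterministic step-independent atomic policies equals the supremum over deterministic joint policies,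 and both equal g (Theorem 2: the optimal long-run average reward of step-independent atomic policies equals that of the original joint policies). -/
open Filter Finset Matrix

/-!
A solution `(g, h)` of the joint optimality equation gives the Bellman inequality
`r_σ + P_σ h ≤ g + h` for every joint policy `σ`. Telescoping along the chain bounds the
`n`-period total reward by `n g + h - P_σ^n h`; as `‖P_σ^n h‖ ≤ ‖h‖`, the average reward has
limsup at most `g`, and tends to `g` when the Bellman relation is an equality. A step-independent
policy is the joint policy that plays its own `K`-step rollout, so it remains to find a
step-independent policy attaining equality.

Under the passing structure the passing-last equation has a solution `h̃`, built by value
iteration on the idle count: a non-passing action lowers it, so the iteration is stable after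
`K` rounds. Passing is a free self-loop, hence `h̃` dominates the value of every feasible atomic
sequence and `h ≤ h̃`. The greedy policy for `h̃` has passed by step `K`, so its rollout is a
feasible sequence worth `h̃`, and `h̃ ≤ h`. Thus `h̃ = h`, and the greedy policy satisfies the
Bellman equation with equality.
-/

open Topology

section RowStochasticMatrix

variable {S : Type*} [Fintype S] [DecidableEq S] {P : Matrix S S ℝ}

theorem mulVec_mono_of_mem_rowStochastic (hP : P ∈ rowStochastic ℝ S) {v w : S → ℝ}
    (hvw : v ≤ w) : P *ᵥ v ≤ P *ᵥ w := by
  have := nonneg_mulVec_of_mem_rowStochastic hP (x := w - v) fun i => sub_nonneg.2 (hvw i)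
  intro s
  simpa [mulVec_sub] using this s

theorem mulVec_const_of_mem_rowStochastic (hP : P ∈ rowStochastic ℝ S) (c : ℝ) :
    P *ᵥ (fun _ => c) = fun _ => c := by
  have : (fun _ => c : S → ℝ) = c • 1 := by ext; simp
  rw [this, mulVec_smul, one_vecMul_of_mem_rowStochastic hP]

theorem norm_mulVec_le_of_mem_rowStochastic (hP : P ∈ rowStochastic ℝ S) (v : S → ℝ) :
    ‖P *ᵥ v‖ ≤ ‖v‖ := by
  have hv (t : S) : |v t| ≤ ‖v‖ := norm_le_pi_norm v t
  have hle := mulVec_mono_of_mem_rowStochastic hP fun t => (abs_le.1 (hv t)).2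
  have hge := mulVec_mono_of_mem_rowStochastic hP (v := fun _ => -‖v‖)
    fun t => (abs_le.1 (hv t)).1
  rw [mulVec_const_of_mem_rowStochastic hP] at hle hge
  exact pi_norm_le_iff_of_nonneg (norm_nonneg v) |>.2 fun s => abs_le.2 ⟨hge s, hle s⟩

theorem sum_pow_mulVec_telescope (hP : P ∈ rowStochastic ℝ S) (g : ℝ) (h : S → ℝ) (n : ℕ) :
    ∑ t ∈ range n, P ^ t *ᵥ (fun u => g + h u - (P *ᵥ h) u) =
      fun u => n * g + h u - (P ^ n *ᵥ h) u := by
  have hgap : (fun u => g + h u - (P *ᵥ h) u) = (fun _ => g) + (h - P *ᵥ h) := by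
    ext u; simp only [Pi.add_apply, Pi.sub_apply]; ring
  have hpow (t : ℕ) : P ^ t *ᵥ ((fun _ => g) + (h - P *ᵥ h)) =
      (fun _ => g) + (P ^ t *ᵥ h - P ^ (t + 1) *ᵥ h) := by
    rw [mulVec_add, mulVec_sub, mulVec_const_of_mem_rowStochastic (pow_mem hP t), mulVec_mulVec,
      pow_succ]
  simp only [hgap, hpow, sum_add_distrib, sum_range_sub', sum_const, card_range, pow_zero,
    one_mulVec]
  ext u
  simp only [Pi.add_apply, Pi.sub_apply, nsmul_eq_mul, Pi.mul_apply, Pi.natCast_apply]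
  ring

theorem avgRew_mono (hP : P ∈ rowStochastic ℝ S) {r r' : S → ℝ} (hr : r ≤ r') (s : S)
    (n : ℕ) : avgRew P r s n ≤ avgRew P r' s n :=
  mul_le_mul_of_nonneg_left
    (sum_le_sum fun t _ => mulVec_mono_of_mem_rowStochastic (pow_mem hP t) hr s) (by positivity)

theorem avgRew_of_bellman_eq (hP : P ∈ rowStochastic ℝ S) {r h : S → ℝ} {g : ℝ}
    (hr : ∀ s, r s + (P *ᵥ h) s = g + h s) (s : S) {n : ℕ} (hn : n ≠ 0) :
    avgRew P r s n = g + (h s - (P ^ n *ᵥ h) s) / n := by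
  have hgap : r = fun u => g + h u - (P *ᵥ h) u := funext fun u => by linarith [hr u]
  have hsum := congrFun (sum_pow_mulVec_telescope hP g h n) s
  rw [Finset.sum_apply] at hsum
  rw [avgRew, hgap, hsum]
  field_simp
  ring

theorem tendsto_avgRew_of_bellman_eq (hP : P ∈ rowStochastic ℝ S) {r h : S → ℝ} {g : ℝ}
    (hr : ∀ s, r s + (P *ᵥ h) s = g + h s) (s : S) :
    Tendsto (avgRew P r s) atTop (𝓝 g) := by
  have hbound (n : ℕ) : ‖h s - (P ^ n *ᵥ h) s‖ ≤ 2 * ‖h‖ := by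
    calc ‖h s - (P ^ n *ᵥ h) s‖ ≤ ‖h s‖ + ‖(P ^ n *ᵥ h) s‖ := norm_sub_le _ _
      _ ≤ ‖h‖ + ‖P ^ n *ᵥ h‖ := add_le_add (norm_le_pi_norm h s) (norm_le_pi_norm _ s)
      _ ≤ 2 * ‖h‖ := by
        linarith [norm_mulVec_le_of_mem_rowStochastic (pow_mem hP n) h]
  have hdecay : Tendsto (fun n : ℕ => (h s - (P ^ n *ᵥ h) s) / n) atTop (𝓝 0) := by
    refine squeeze_zero_norm (fun n => ?_) (tendsto_const_div_atTop_nhds_zero_nat (2 * ‖h‖))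
    rw [norm_div, RCLike.norm_natCast]
    exact div_le_div_of_nonneg_right (hbound n) n.cast_nonneg
  have hlim : Tendsto (fun n : ℕ => g + (h s - (P ^ n *ᵥ h) s) / n) atTop (𝓝 g) := by
    simpa using hdecay.const_add g
  refine hlim.congr' ?_
  filter_upwards [eventually_ne_atTop 0] with n hn using (avgRew_of_bellman_eq hP hr s hn).symm

theorem limsup_avgRew_le_of_bellman_le (hP : P ∈ rowStochastic ℝ S) {r h : S → ℝ} {g : ℝ}
    (hr : ∀ s, r s + (P *ᵥ h) s ≤ g + h s) (s : S) :
    limsup (avgRew P r s) atTop ≤ g := by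
  set r' : S → ℝ := fun u => g + h u - (P *ᵥ h) u
  have hlim := tendsto_avgRew_of_bellman_eq hP (r := r') (fun u => sub_add_cancel _ _) s
  have hconst (c : ℝ) {n : ℕ} (hn : n ≠ 0) : avgRew P (fun _ => c) s n = c := by
    simpa using avgRew_of_bellman_eq hP (h := 0) (g := c) (by simp) s hn
  have hlower : ∀ᶠ n in atTop, -‖r‖ ≤ avgRew P r s n := by
    filter_upwards [eventually_ne_atTop 0] with n hn
    rw [← hconst (-‖r‖) hn]
    exact avgRew_mono hP (fun u => neg_le.1 ((neg_le_abs (r u)).trans (norm_le_pi_norm r u))) s n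
  calc limsup (avgRew P r s) atTop ≤ limsup (avgRew P r' s) atTop :=
        limsup_le_limsup
          (Eventually.of_forall (avgRew_mono hP (fun u => le_sub_iff_add_le.2 (hr u)) s))
          (isCoboundedUnder_le_of_eventually_le atTop hlower) hlim.isBoundedUnder_le
    _ = g := hlim.limsup_eq

end RowStochasticMatrix

section Rollout

variable {S A : Type*} (T : S → A → S) (rhat : A → ℝ)

theorem sum_add_rollSeq_le {As : S → Finset A} {V : S → ℝ}
    (hV : ∀ u, ∀ a ∈ As u, rhat a + V (T u a) ≤ V u) {s : S} {a : ℕ → A} {j : ℕ}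
    (ha : ∀ k < j, a k ∈ As (rollSeq T s a k)) :
    ∑ k ∈ range j, rhat (a k) + V (rollSeq T s a j) ≤ V s := by
  induction j with
  | zero => simp [rollSeq]
  | succ j ih =>
    have hstep := hV _ (a j) (ha j j.lt_succ_self)
    rw [sum_range_succ, rollSeq]
    linarith [ih fun k hk => ha k (hk.trans j.lt_succ_self)]

theorem eq_sum_add_rollDep {pol : S → A} {V : S → ℝ}
    (hV : ∀ u, V u = rhat (pol u) + V (T u (pol u))) (s : S) (j : ℕ) :
    V s = ∑ k ∈ range j, rhat (pol (rollDep T (fun _ => pol) s k)) +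
      V (rollDep T (fun _ => pol) s j) := by
  induction j with
  | zero => simp [rollDep]
  | succ j ih => rw [sum_range_succ, rollDep, ih, hV (rollDep T _ s j)]; ring

def rolloutJoint (pol : S → A) (s : S) (k : ℕ) : A :=
  pol (rollDep T (fun _ => pol) s k)

theorem rollSeq_rolloutJoint (pol : S → A) (s : S) (n : ℕ) :
    rollSeq T s (rolloutJoint T pol s) n = rollDep T (fun _ => pol) s n := by
  induction n with
  | zero => rfl
  | succ n ih => rw [rollSeq, rollDep, ih]; rfl

theorem feasibleSeq_rolloutJoint {As : S → Finset A} {pol : S → A} (hpol : ∀ u, pol u ∈ As u)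
    (K : ℕ) (s : S) : FeasibleSeq T As K s (rolloutJoint T pol s) := fun k _ => by
  rw [rollSeq_rolloutJoint]
  exact hpol _

theorem jointP_rolloutJoint (Psys : Matrix S S ℝ) (K : ℕ) (pol : S → A) :
    jointP T Psys K (rolloutJoint T pol) = indP T Psys K pol := by
  ext s s'
  simp only [jointP, indP, depP, postState, of_apply, rollSeq_rolloutJoint]

theorem jointR_rolloutJoint (rH : S → ℝ) (K : ℕ) (pol : S → A) :
    jointR T rhat rH K (rolloutJoint T pol) = indR T rhat rH K pol := by
  ext s
  simp only [jointR, indR, depR, seqReward, rollSeq_rolloutJoint, rolloutJoint]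

end Rollout

theorem RowStochastic.jointP_mem {S A : Type*} [Fintype S] [DecidableEq S] {Psys : Matrix S S ℝ}
    (hPsys : RowStochastic Psys) (T : S → A → S) (K : ℕ) (σ : S → ℕ → A) :
    jointP T Psys K σ ∈ rowStochastic ℝ S :=
  mem_rowStochastic_iff_sum.2 ⟨fun _ _ => hPsys.1 _ _, fun _ => hPsys.2 _⟩

theorem JointOptEq.jointR_add_mulVec_le {S A : Type*} [Fintype S] {T : S → A → S}
    {As : S → Finset A} {rhat : A → ℝ} {rH : S → ℝ} {Psys : Matrix S S ℝ} {K : ℕ} {g : ℝ}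
    {h : S → ℝ} (hopt : JointOptEq T As rhat rH Psys K g h) {σ : S → ℕ → A}
    (hσ : ∀ u, FeasibleSeq T As K u (σ u)) (s : S) :
    jointR T rhat rH K σ s + (jointP T Psys K σ *ᵥ h) s ≤ g + h s := by
  have := (hopt s).2 ⟨σ s, hσ s, rfl⟩
  simp only [jointR, jointP, mulVec, dotProduct, of_apply]
  linarith

namespace PassingStruct

variable {S A : Type*} {T : S → A → S} {As : S → Finset A} {rhat : A → ℝ} {K : ℕ} {pass : A}
  {ι : S → ℕ}

theorem pol_rollDep_eq_pass (hpass : PassingStruct T As rhat K pass ι) {pol : S → A}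
    (hpol : ∀ u, pol u ∈ As u) (s : S) : pol (rollDep T (fun _ => pol) s K) = pass := by
  obtain ⟨-, hTpass, -, hιK, hdec, hι0⟩ := hpass
  set path := rollDep T (fun _ => pol) s
  have hpath (m : ℕ) : path (m + 1) = T (path m) (pol (path m)) := rfl
  have key (m : ℕ) (hm : m ≤ K) : ι (path m) ≤ K - m ∨ pol (path m) = pass := by
    induction m with
    | zero => exact Or.inl (hιK s)
    | succ m ih =>
      by_cases hp : pol (path m) = pass
      · rw [hpath, hp, hTpass, hp]; exact Or.inr rfl
      · have := hdec _ _ (hpol _) hp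
        rw [← hpath] at this
        rcases ih (by omega) with hι | hp'
        · left; omega
        · exact absurd hp' hp
  rcases key K le_rfl with hι | hp
  · have := hpol (path K)
    rwa [hι0 _ (by omega), mem_singleton] at this
  · exact hp

theorem exists_passLastEq [Fintype S] [DecidableEq A] (hpass : PassingStruct T As rhat K pass ι)
    (rH : S → ℝ) (Psys : Matrix S S ℝ) (g : ℝ) (h : S → ℝ) :
    ∃ htil, PassLastEq T As rhat rH Psys pass g h htil := by
  obtain ⟨hpassmem, -, -, hιK, hdec, hι0⟩ := hpass
  let B : (S → ℝ) → S → Set ℝ := fun V s => {x | ∃ a ∈ As s,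
    x = if a = pass then rH s - g + ∑ s', Psys s s' * h s' else rhat a + V (T s a)}
  have hgreatest (V : S → ℝ) (s : S) : ∃ x, IsGreatest (B V s) x := by
    obtain ⟨a, ha, hmax⟩ := exists_max_image (As s)
      (fun a => if a = pass then rH s - g + ∑ s', Psys s s' * h s' else rhat a + V (T s a))
      ⟨pass, hpassmem s⟩
    exact ⟨_, ⟨a, ha, rfl⟩, by rintro x ⟨b, hb, rfl⟩; exact hmax b hb⟩
  have hstage (n : ℕ) : ∃ V : S → ℝ, ∀ s, ι s ≤ n → IsGreatest (B V s) (V s) := by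
    induction n with
    | zero =>
      refine ⟨fun s => rH s - g + ∑ s', Psys s s' * h s', fun s hs => ?_⟩
      have hAs := hι0 s (Nat.le_zero.1 hs)
      refine ⟨⟨pass, hpassmem s, (if_pos rfl).symm⟩, ?_⟩
      rintro x ⟨b, hb, rfl⟩
      rw [hAs, mem_singleton] at hb
      rw [if_pos hb]
    | succ n ih =>
      obtain ⟨V, hV⟩ := ih
      choose W hW using hgreatest V
      refine ⟨W, fun s hs => ?_⟩
      suffices B W s = B V s by rw [this]; exact hW s
      refine Set.ext fun x => exists_congr fun a => and_congr_right fun ha => ?_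
      by_cases hp : a = pass
      · simp only [if_pos hp]
      · have := hdec s a ha hp
        rw [if_neg hp, if_neg hp, (hW (T s a)).unique (hV (T s a) (by omega))]
  obtain ⟨V, hV⟩ := hstage K
  exact ⟨V, fun s => hV s (hιK s)⟩

end PassingStruct

theorem JointOptEq.exists_indR_add_mulVec_eq {S A : Type*} [Fintype S]
    {T : S → A → S} {As : S → Finset A} {rhat : A → ℝ} {rH : S → ℝ} {Psys : Matrix S S ℝ}
    {K : ℕ} {pass : A} {ι : S → ℕ} {g : ℝ} {h : S → ℝ}
    (hopt : JointOptEq T As rhat rH Psys K g h) (hpass : PassingStruct T As rhat K pass ι) :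
    ∃ pol : S → A, (∀ u, pol u ∈ As u) ∧
      ∀ s, indR T rhat rH K pol s + (indP T Psys K pol *ᵥ h) s = g + h s := by
  classical
  have ⟨hpassmem, hTpass, hrpass, _⟩ := hpass
  obtain ⟨htil, hL⟩ := hpass.exists_passLastEq rH Psys g h
  choose pol hpol hpolval using fun s => (hL s).1
  have hstep (u : S) : htil u = rhat (pol u) + htil (T u (pol u)) := by
    by_cases hp : pol u = pass
    · rw [hp, hTpass, hrpass, zero_add]
    · exact (hpolval u).trans (if_neg hp)
  have hsuper (u : S) (a : A) (ha : a ∈ As u) : rhat a + htil (T u a) ≤ htil u := by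
    by_cases hp : a = pass
    · rw [hp, hTpass, hrpass, zero_add]
    · simpa only [if_neg hp] using (hL u).2 ⟨a, ha, rfl⟩
  have hpv (u : S) : rH u - g + ∑ s', Psys u s' * h s' ≤ htil u :=
    (hL u).2 ⟨pass, hpassmem u, (if_pos rfl).symm⟩
  have hval (s : S) : indR T rhat rH K pol s + (indP T Psys K pol *ᵥ h) s = g + htil s := by
    have hend := hpolval (rollDep T (fun _ => pol) s K)
    rw [if_pos (hpass.pol_rollDep_eq_pass hpol s)] at hend
    have := eq_sum_add_rollDep T rhat hstep s K
    simp only [indR, depR, indP, depP, mulVec, dotProduct, of_apply]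
    linarith
  have hle (s : S) : h s ≤ htil s := by
    obtain ⟨a, ha, heq⟩ := (hopt s).1
    have := sum_add_rollSeq_le T rhat hsuper ha
    rw [heq]
    simp only [seqReward, postState]
    linarith [hpv (rollSeq T s a K)]
  have hge (s : S) : htil s ≤ h s := by
    have := hopt.jointR_add_mulVec_le (feasibleSeq_rolloutJoint T hpol K) s
    rw [jointR_rolloutJoint, jointP_rolloutJoint, hval] at this
    linarith
  exact ⟨pol, hpol, fun s => by rw [hval, le_antisymm (hge s) (hle s)]⟩

theorem stmt1_general {S A : Type*} [Fintype S] [DecidableEq S]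
    (T : S → A → S) (As : S → Finset A)
    (rhat : A → ℝ) (rH : S → ℝ) (Psys : Matrix S S ℝ) (hPsys : RowStochastic Psys)
    (K : ℕ) (pass : A) (ι : S → ℕ)
    (hpass : PassingStruct T As rhat K pass ι)
    (g : ℝ) (h : S → ℝ) (hopt : JointOptEq T As rhat rH Psys K g h) :
    ∀ s : S,
      (∀ pol : S → A, (∀ u, pol u ∈ As u) →
        Filter.limsup (avgRew (indP T Psys K pol) (indR T rhat rH K pol) s)
          Filter.atTop ≤ g) ∧
      (∃ pol : S → A, (∀ u, pol u ∈ As u) ∧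
        ∀ u, Filter.Tendsto (avgRew (indP T Psys K pol) (indR T rhat rH K pol) u)
          Filter.atTop (nhds g)) ∧
      (∀ σ : S → ℕ → A, (∀ u, FeasibleSeq T As K u (σ u)) →
        Filter.limsup (avgRew (jointP T Psys K σ) (jointR T rhat rH K σ) s)
          Filter.atTop ≤ g) ∧
      (∃ σ : S → ℕ → A, (∀ u, FeasibleSeq T As K u (σ u)) ∧
        ∀ u, Filter.Tendsto (avgRew (jointP T Psys K σ) (jointR T rhat rH K σ) u)
          Filter.atTop (nhds g)) ∧
      sSup {x : ℝ | ∃ pol : S → A, (∀ u, pol u ∈ As u) ∧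
          x = Filter.limsup (avgRew (indP T Psys K pol) (indR T rhat rH K pol) s)
            Filter.atTop} = g ∧
      sSup {x : ℝ | ∃ σ : S → ℕ → A, (∀ u, FeasibleSeq T As K u (σ u)) ∧
          x = Filter.limsup (avgRew (jointP T Psys K σ) (jointR T rhat rH K σ) s)
            Filter.atTop} = g := by
  have hjoint (σ : S → ℕ → A) (hσ : ∀ u, FeasibleSeq T As K u (σ u)) (u : S) :
      limsup (avgRew (jointP T Psys K σ) (jointR T rhat rH K σ) u) atTop ≤ g :=
    limsup_avgRew_le_of_bellman_le (hPsys.jointP_mem T K σ) (hopt.jointR_add_mulVec_le hσ) u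
  have hatomic (pol : S → A) (hpol : ∀ u, pol u ∈ As u) (u : S) :
      limsup (avgRew (indP T Psys K pol) (indR T rhat rH K pol) u) atTop ≤ g := by
    rw [← jointP_rolloutJoint, ← jointR_rolloutJoint]
    exact hjoint _ (feasibleSeq_rolloutJoint T hpol K) u
  obtain ⟨pol, hpol, hbellman⟩ := hopt.exists_indR_add_mulVec_eq hpass
  have hpolOpt (u : S) :
      Tendsto (avgRew (indP T Psys K pol) (indR T rhat rH K pol) u) atTop (𝓝 g) := by
    rw [← jointP_rolloutJoint] at hbellman ⊢
    exact tendsto_avgRew_of_bellman_eq (hPsys.jointP_mem T K _) hbellman u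
  have hσOpt (u : S) : Tendsto (avgRew (jointP T Psys K (rolloutJoint T pol))
      (jointR T rhat rH K (rolloutJoint T pol)) u) atTop (𝓝 g) := by
    rw [jointP_rolloutJoint, jointR_rolloutJoint]
    exact hpolOpt u
  intro s
  refine ⟨fun pol' hpol' => hatomic pol' hpol' s, ⟨pol, hpol, hpolOpt⟩,
    fun σ hσ => hjoint σ hσ s, ⟨_, feasibleSeq_rolloutJoint T hpol K, hσOpt⟩,
    IsGreatest.csSup_eq ⟨⟨pol, hpol, (hpolOpt s).limsup_eq.symm⟩, ?_⟩,
    IsGreatest.csSup_eq ⟨⟨_, feasibleSeq_rolloutJoint T hpol K, (hσOpt s).limsup_eq.symm⟩, ?_⟩⟩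
  · rintro x ⟨pol', hpol', rfl⟩
    exact hatomic pol' hpol' s
  · rintro x ⟨σ, hσ, rfl⟩
    exact hjoint σ hσ s

/-- **Theorem 2** (atomic action decomposition, step-independent policies): under the passing
structure, if the joint optimality equation admits a solution `(g, h)`, then every deterministic
step-independent atomic policy and every deterministic joint policy has long-run average reward
at most `g`, both classes contain a policy attaining `g`, and both optimal long-run average
rewards equal `g`. -/
theorem stmt1 {S A : Type*} [Fintype S] [DecidableEq S] [Nonempty S] [Fintype A]
    (T : S → A → S) (As : S → Finset A) (hAs : ∀ s, (As s).Nonempty)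
    (rhat : A → ℝ) (rH : S → ℝ) (Psys : Matrix S S ℝ) (hPsys : RowStochastic Psys)
    (K : ℕ) (hK : 1 ≤ K) (pass : A) (ι : S → ℕ)
    (hpass : PassingStruct T As rhat K pass ι)
    (g : ℝ) (h : S → ℝ) (hopt : JointOptEq T As rhat rH Psys K g h) :
    ∀ s : S,
      (∀ pol : S → A, (∀ u, pol u ∈ As u) →
        Filter.limsup (avgRew (indP T Psys K pol) (indR T rhat rH K pol) s)
          Filter.atTop ≤ g) ∧
      (∃ pol : S → A, (∀ u, pol u ∈ As u) ∧
        ∀ u, Filter.Tendsto (avgRew (indP T Psys K pol) (indR T rhat rH K pol) u)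
          Filter.atTop (nhds g)) ∧
      (∀ σ : S → ℕ → A, (∀ u, FeasibleSeq T As K u (σ u)) →
        Filter.limsup (avgRew (jointP T Psys K σ) (jointR T rhat rH K σ) s)
          Filter.atTop ≤ g) ∧
      (∃ σ : S → ℕ → A, (∀ u, FeasibleSeq T As K u (σ u)) ∧
        ∀ u, Filter.Tendsto (avgRew (jointP T Psys K σ) (jointR T rhat rH K σ) u)
          Filter.atTop (nhds g)) ∧
      sSup {x : ℝ | ∃ pol : S → A, (∀ u, pol u ∈ As u) ∧
          x = Filter.limsup (avgRew (indP T Psys K pol) (indR T rhat rH K pol) s)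
            Filter.atTop} = g ∧
      sSup {x : ℝ | ∃ σ : S → ℕ → A, (∀ u, FeasibleSeq T As K u (σ u)) ∧
          x = Filter.limsup (avgRew (jointP T Psys K σ) (jointR T rhat rH K σ) s)
            Filter.atTop} = g :=
  stmt1_general T As rhat rH Psys hPsys K pass ι hpass g h hopt
end

section
/- Assume the passing structure. Let π̃ be a deterministic step-independent atomic policy, let s ∈ S, and let s_1 = s, â_k = π̃(s_k), s_{k+1} = T(s_k, â_k) for k = 1, …, K be its K-step rollout. If k* is the least index with â_{k*} = 0 (the passing action), then â_k = 0 and s_k = s_{k*} for all k* ≤ k ≤ K + 1; in particular the post-decision state satisfies s_{K+1} = s_{k*} and Σ_{k=1}^K r̂(â_k) = Σ_{k=1}^{k*−1} r̂(â_k). Consequently, the K-step rollout and the rollout truncated at the first passing action yield the same per-period reward vector r_π̃ and the same transition matrix P_π̃, so the passing-last atomic MDP and the K-step atomic MDP have equal long-run average reward under π̃ (Lemma 3). -/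
open Filter Finset Matrix

/-- The first atomic step (within a period of `K` steps) at which the step-independent policy
`pol` selects the passing action along its rollout from `s` (or `K` if it never passes). -/
noncomputable def firstPass {S A : Type*} (T : S → A → S) (pol : S → A) (pass : A) (K : ℕ)
    (s : S) : ℕ :=
  sInf ({k | pol (rollDep T (fun _ => pol) s k) = pass} ∪ {K})

/-- Per-period reward vector of the passing-last atomic MDP under `pol` (rollout truncated at
the first passing action). -/
noncomputable def plR {S A : Type*} (T : S → A → S) (rhat : A → ℝ) (rH : S → ℝ)
    (pol : S → A) (pass : A) (K : ℕ) (s : S) : ℝ :=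
  (∑ k ∈ Finset.range (firstPass T pol pass K s),
    rhat (pol (rollDep T (fun _ => pol) s k)))
  + rH (rollDep T (fun _ => pol) s (firstPass T pol pass K s))

/-- Transition matrix of the passing-last atomic MDP under `pol`. -/
noncomputable def plP {S A : Type*} (T : S → A → S) (Psys : Matrix S S ℝ)
    (pol : S → A) (pass : A) (K : ℕ) : Matrix S S ℝ :=
  Matrix.of fun s s' => Psys (rollDep T (fun _ => pol) s (firstPass T pol pass K s)) s'

/-- **Lemma 3**: under the passing structure, once a deterministic step-independent atomic
policy first selects the passing action, the state is unchanged and the passing action is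
repeated for the rest of the period; hence the `K`-step rollout and the rollout truncated at the
first passing action induce the same per-period reward vector and the same transition matrix,
so the passing-last atomic MDP and the `K`-step atomic MDP have equal long-run average reward
under the policy. -/
theorem stmt5 {S A : Type*} [Fintype S] [DecidableEq S] [Nonempty S] [Fintype A] [DecidableEq A]
    (T : S → A → S) (As : S → Finset A) (hAs : ∀ s, (As s).Nonempty)
    (rhat : A → ℝ) (rH : S → ℝ) (Psys : Matrix S S ℝ) (hPsys : RowStochastic Psys)
    (K : ℕ) (hK : 1 ≤ K) (pass : A) (ι : S → ℕ)
    (hpass : PassingStruct T As rhat K pass ι)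
    (pol : S → A) (hpol : ∀ u, pol u ∈ As u) :
    (∀ s : S, ∀ k0 : ℕ, k0 < K → pol (rollDep T (fun _ => pol) s k0) = pass →
      (∀ j, j < k0 → pol (rollDep T (fun _ => pol) s j) ≠ pass) →
      (∀ k, k0 ≤ k → k ≤ K →
        rollDep T (fun _ => pol) s k = rollDep T (fun _ => pol) s k0 ∧
        (k < K → pol (rollDep T (fun _ => pol) s k) = pass)) ∧
      (∑ k ∈ Finset.range K, rhat (pol (rollDep T (fun _ => pol) s k))
        = ∑ k ∈ Finset.range k0, rhat (pol (rollDep T (fun _ => pol) s k)))) ∧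
    (∀ s, plR T rhat rH pol pass K s = indR T rhat rH K pol s) ∧
    (∀ s s', plP T Psys pol pass K s s' = indP T Psys K pol s s') ∧
    (∀ s, Filter.limsup (avgRew (plP T Psys pol pass K) (plR T rhat rH pol pass K) s)
        Filter.atTop
      = Filter.limsup (avgRew (indP T Psys K pol) (indR T rhat rH K pol) s)
        Filter.atTop) := by
  classical
  have hTpass : ∀ u : S, T u pass = u := hpass.2.1
  have hrpass : rhat pass = 0 := hpass.2.2.1
  -- Once the policy passes, the state is fixed forever
  have stay : ∀ s : S, ∀ k0 : ℕ, pol (rollDep T (fun _ => pol) s k0) = pass →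
      ∀ k, k0 ≤ k → rollDep T (fun _ => pol) s k = rollDep T (fun _ => pol) s k0 := by
    intro s k0 hp k hk
    induction k with
    | zero =>
      have : k0 = 0 := Nat.le_zero.mp hk
      rw [this]
    | succ n ih =>
      rcases Nat.lt_or_ge k0 (n + 1) with h | h
      · have hn := ih (Nat.lt_succ_iff.mp h)
        show T (rollDep T (fun _ => pol) s n) (pol (rollDep T (fun _ => pol) s n))
            = rollDep T (fun _ => pol) s k0
        rw [hn, hp, hTpass]
      · rw [le_antisymm hk h]
  -- The sum over the whole period equals the sum up to the first pass
  have sumEq : ∀ s : S, ∀ k0 : ℕ, k0 ≤ K → pol (rollDep T (fun _ => pol) s k0) = pass →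
      ∑ k ∈ Finset.range K, rhat (pol (rollDep T (fun _ => pol) s k))
        = ∑ k ∈ Finset.range k0, rhat (pol (rollDep T (fun _ => pol) s k)) := by
    intro s k0 hk0K hp
    rw [← Finset.sum_range_add_sum_Ico _ hk0K]
    have hz : ∑ k ∈ Finset.Ico k0 K, rhat (pol (rollDep T (fun _ => pol) s k)) = 0 := by
      apply Finset.sum_eq_zero
      intro k hk
      rw [stay s k0 hp k (Finset.mem_Ico.mp hk).1, hp, hrpass]
    rw [hz, add_zero]
  -- Properties of firstPass
  have fpK : ∀ s : S, firstPass T pol pass K s ≤ K := by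
    intro s
    exact Nat.sInf_le (Or.inr rfl)
  have fpMem : ∀ s : S, firstPass T pol pass K s < K →
      pol (rollDep T (fun _ => pol) s (firstPass T pol pass K s)) = pass := by
    intro s hlt
    have hmem : firstPass T pol pass K s ∈
        ({k | pol (rollDep T (fun _ => pol) s k) = pass} ∪ {K} : Set ℕ) := by
      apply Nat.sInf_mem
      exact ⟨K, Or.inr rfl⟩
    rcases hmem with h | h
    · exact h
    · exact absurd h (Nat.ne_of_lt hlt)
  have stateEq : ∀ s : S, rollDep T (fun _ => pol) s K
      = rollDep T (fun _ => pol) s (firstPass T pol pass K s) := by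
    intro s
    rcases lt_or_eq_of_le (fpK s) with h | h
    · exact stay s _ (fpMem s h) K (le_of_lt h)
    · rw [h]
  have sumEq' : ∀ s : S,
      ∑ k ∈ Finset.range K, rhat (pol (rollDep T (fun _ => pol) s k))
        = ∑ k ∈ Finset.range (firstPass T pol pass K s),
            rhat (pol (rollDep T (fun _ => pol) s k)) := by
    intro s
    rcases lt_or_eq_of_le (fpK s) with h | h
    · exact sumEq s _ (le_of_lt h) (fpMem s h)
    · rw [h]
  have hR : ∀ s, plR T rhat rH pol pass K s = indR T rhat rH K pol s := by
    intro s
    unfold plR indR depR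
    rw [sumEq', stateEq]
  have hP : ∀ s s', plP T Psys pol pass K s s' = indP T Psys K pol s s' := by
    intro s s'
    unfold plP indP depP
    simp only [Matrix.of_apply]
    rw [stateEq]
  refine ⟨?_, hR, hP, ?_⟩
  · intro s k0 hk0K hp hmin
    constructor
    · intro k hk0 hkK
      refine ⟨stay s k0 hp k hk0, fun hkK' => ?_⟩
      rw [stay s k0 hp k hk0, hp]
    · exact sumEq s k0 (le_of_lt hk0K) hp
  · intro s
    have hRf : plR T rhat rH pol pass K = indR T rhat rH K pol := funext hR
    have hPf : plP T Psys pol pass K = indP T Psys K pol := by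
      ext s1 s2; exact hP s1 s2
    rw [hRf, hPf]
end

section
/- Assume the passing structure and let (g, h) satisfy the joint optimality equation. Then there exists a function h̃ : S → ℝ satisfying the passing-last equation relative to (g, h) (Lemma 4: existence of the relative value function of the passing-last atomic MDP, constructible layer by layer in the idle count ι). -/
open Filter Finset Matrix

/-!
Every non-passing action lowers the idle count by one, and at idle count `0` only passing is
feasible, so the passing-last equation is a recursion on the layers `ι = 0, 1, 2, …`. Writing
`c s = r_H(s) - g + Σ P_sys(s, s') h(s')` for the value of passing, let `V₀ = c` and
`V_{n+1}(s) = max_{a ∈ A_s} (c s if a = 0, else r̂(a) + V_n(T(s, a)))`; then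
`h̃(s) := V_{ι(s)}(s)` solves the equation.
-/

theorem Finset.isGreatest_sup' {α β : Type*} [LinearOrder α] {s : Finset β} (H : s.Nonempty)
    (f : β → α) : IsGreatest {x | ∃ b ∈ s, x = f b} (s.sup' H f) := by
  obtain ⟨b, hb, hmax⟩ := s.exists_mem_eq_sup' H f
  exact ⟨⟨b, hb, hmax⟩, by rintro x ⟨b', hb', rfl⟩; exact s.le_sup' f hb'⟩

section PassingLast

variable {S A : Type*} [DecidableEq A] (T : S → A → S) (As : S → Finset A)
  (hAs : ∀ s, (As s).Nonempty) (rhat : A → ℝ) (pass : A) (c : S → ℝ)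

noncomputable def passLastValue : ℕ → S → ℝ
  | 0 => c
  | n + 1 => fun s => (As s).sup' (hAs s) fun a =>
      if a = pass then c s else rhat a + passLastValue n (T s a)

variable {T As pass} (ι : S → ℕ)

theorem passLastValue_idle_eq_sup'
    (hstep : ∀ s, ∀ a ∈ As s, a ≠ pass → ι (T s a) = ι s - 1)
    (hzero : ∀ s, ι s = 0 → As s = {pass}) (s : S) :
    passLastValue T As hAs rhat pass c (ι s) s = (As s).sup' (hAs s) fun a =>
      if a = pass then c s
      else rhat a + passLastValue T As hAs rhat pass c (ι (T s a)) (T s a) := by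
  cases hs : ι s with
  | zero =>
    rw [Finset.sup'_congr (hAs s) (hzero s hs) fun _ _ => rfl, Finset.sup'_singleton, if_pos rfl]
    rfl
  | succ n =>
    refine Finset.sup'_congr (hAs s) rfl fun a ha => ?_
    by_cases hp : a = pass
    · simp only [hp, if_pos]
    · simp only [hp, if_false, hstep s a ha hp, hs, Nat.add_sub_cancel]

theorem isGreatest_passLastValue_idle
    (hstep : ∀ s, ∀ a ∈ As s, a ≠ pass → ι (T s a) = ι s - 1)
    (hzero : ∀ s, ι s = 0 → As s = {pass}) (s : S) :
    IsGreatest {x | ∃ a ∈ As s, x = if a = pass then c s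
        else rhat a + passLastValue T As hAs rhat pass c (ι (T s a)) (T s a)}
      (passLastValue T As hAs rhat pass c (ι s) s) := by
  rw [passLastValue_idle_eq_sup' hAs rhat c ι hstep hzero s]
  exact Finset.isGreatest_sup' (hAs s) _

end PassingLast

theorem stmt6_general {S A : Type*} [Fintype S] [DecidableEq A]
    (T : S → A → S) (As : S → Finset A) (hAs : ∀ s, (As s).Nonempty)
    (rhat : A → ℝ) (rH : S → ℝ) (Psys : Matrix S S ℝ)
    (K : ℕ) (pass : A) (ι : S → ℕ)
    (hpass : PassingStruct T As rhat K pass ι)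
    (g : ℝ) (h : S → ℝ) :
    ∃ htil : S → ℝ, PassLastEq T As rhat rH Psys pass g h htil := by
  obtain ⟨-, -, -, -, hdec, hzero⟩ := hpass
  exact ⟨fun s => passLastValue T As hAs rhat pass _ (ι s) s,
    isGreatest_passLastValue_idle hAs rhat _ ι
      (fun s a ha hp => (hdec s a ha hp).2) hzero⟩

/-- **Lemma 4**: under the passing structure, if `(g, h)` solves the joint optimality equation,
then there exists a relative value function `h̃` of the passing-last atomic MDP, i.e. a solution
of the passing-last equation relative to `(g, h)`. -/
theorem stmt6 {S A : Type*} [Fintype S] [DecidableEq S] [Nonempty S] [Fintype A] [DecidableEq A]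
    (T : S → A → S) (As : S → Finset A) (hAs : ∀ s, (As s).Nonempty)
    (rhat : A → ℝ) (rH : S → ℝ) (Psys : Matrix S S ℝ) (hPsys : RowStochastic Psys)
    (K : ℕ) (hK : 1 ≤ K) (pass : A) (ι : S → ℕ)
    (hpass : PassingStruct T As rhat K pass ι)
    (g : ℝ) (h : S → ℝ) (hopt : JointOptEq T As rhat rH Psys K g h) :
    ∃ htil : S → ℝ, PassLastEq T As rhat rH Psys pass g h htil :=
  stmt6_general T As hAs rhat rH Psys K pass ι hpass g h
end

section
/- Assume the passing structure, let (g, h) satisfy the joint optimality equation, and let h̃ : S → ℝ satisfy the passing-last equation relative to (g, h). Then h̃(s) = h(s) for every s ∈ S (Lemma 5, first part: the relative value function of the passing-last atomic MDP coincides with that of the original MDP). -/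
open Filter Finset Matrix

/-- **Lemma 5, first part**: under the passing structure, if `(g, h)` solves the joint
optimality equation and `h̃` solves the passing-last equation relative to `(g, h)`, then
`h̃ = h`. -/
theorem stmt7 {S A : Type*} [Fintype S] [DecidableEq S] [Nonempty S] [Fintype A] [DecidableEq A]
    (T : S → A → S) (As : S → Finset A) (hAs : ∀ s, (As s).Nonempty)
    (rhat : A → ℝ) (rH : S → ℝ) (Psys : Matrix S S ℝ) (hPsys : RowStochastic Psys)
    (K : ℕ) (hK : 1 ≤ K) (pass : A) (ι : S → ℕ)
    (hpass : PassingStruct T As rhat K pass ι)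
    (g : ℝ) (h : S → ℝ) (hopt : JointOptEq T As rhat rH Psys K g h)
    (htil : S → ℝ) (hpl : PassLastEq T As rhat rH Psys pass g h htil) :
    ∀ s, htil s = h s := by
  obtain ⟨hpassA, hTpass, hrpass, hιK, hdec, hzero⟩ := hpass
  -- shift lemma for rollouts
  have shift : ∀ (a : ℕ → A) (s : S) (n : ℕ),
      rollSeq T s a (n + 1) = rollSeq T (T s (a 0)) (fun k => a (k + 1)) n := by
    intro a s n
    induction n with
    | zero => rfl
    | succ n ih =>
      show T (rollSeq T s a (n + 1)) (a (n + 1)) = _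
      rw [ih]; rfl
  -- if all actions from index `m` on are `pass`, the rollout stalls at step `m`
  have stall : ∀ (a : ℕ → A) (s : S) (m n : ℕ), m ≤ n → (∀ k, m ≤ k → a k = pass) →
      rollSeq T s a n = rollSeq T s a m := by
    intro a s m n hmn hp
    induction n, hmn using Nat.le_induction with
    | base => rfl
    | succ n hmn ih =>
      show T (rollSeq T s a n) (a n) = _
      rw [hp n hmn, hTpass, ih]
  -- any feasible m-horizon value is at most `htil s`
  have lemB : ∀ (m : ℕ) (s : S) (a : ℕ → A),
      (∀ k, k < m → a k ∈ As (rollSeq T s a k)) →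
      (∑ k ∈ Finset.range m, rhat (a k)) + rH (rollSeq T s a m) - g
        + ∑ s', Psys (rollSeq T s a m) s' * h s' ≤ htil s := by
    intro m
    induction m with
    | zero =>
      intro s a _
      have hmem : rH s - g + ∑ s', Psys s s' * h s' ∈ {x : ℝ | ∃ a ∈ As s,
          x = if a = pass then rH s - g + ∑ s', Psys s s' * h s'
              else rhat a + htil (T s a)} := ⟨pass, hpassA s, by rw [if_pos rfl]⟩
      have := (hpl s).2 hmem
      simpa [rollSeq] using this
    | succ m ih =>
      intro s a hfeas
      have h0 : a 0 ∈ As s := hfeas 0 (Nat.succ_pos m)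
      have hsum : ∑ k ∈ Finset.range (m + 1), rhat (a k)
          = rhat (a 0) + ∑ k ∈ Finset.range m, rhat (a (k + 1)) := by
        rw [Finset.sum_range_succ']; ring
      have hfeas' : ∀ k, k < m →
          (fun j => a (j + 1)) k ∈ As (rollSeq T (T s (a 0)) (fun j => a (j + 1)) k) := by
        intro k hk
        have := hfeas (k + 1) (by omega)
        rwa [shift] at this
      have hroll : rollSeq T s a (m + 1) = rollSeq T (T s (a 0)) (fun j => a (j + 1)) m :=
        shift a s m
      have hih := ih (T s (a 0)) (fun j => a (j + 1)) hfeas'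
      by_cases hp : a 0 = pass
      · have hs' : T s (a 0) = s := by rw [hp, hTpass]
        rw [hs'] at hih hroll
        rw [hsum, hp, hrpass, hroll]
        linarith
      · have hmem : rhat (a 0) + htil (T s (a 0)) ∈ {x : ℝ | ∃ b ∈ As s,
            x = if b = pass then rH s - g + ∑ s', Psys s s' * h s'
                else rhat b + htil (T s b)} := ⟨a 0, h0, by rw [if_neg hp]⟩
        have hub := (hpl s).2 hmem
        rw [hsum, hroll]
        linarith
  -- `htil s` is the value of some feasible sequence (passes after step `ι s`)
  have lemD : ∀ (n : ℕ) (s : S), ι s = n → ∃ a : ℕ → A,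
      (∀ k, k < ι s → a k ∈ As (rollSeq T s a k)) ∧ (∀ k, ι s ≤ k → a k = pass) ∧
      htil s = (∑ k ∈ Finset.range (ι s), rhat (a k)) + rH (rollSeq T s a (ι s)) - g
        + ∑ s', Psys (rollSeq T s a (ι s)) s' * h s' := by
    intro n
    induction n using Nat.strong_induction_on with
    | _ n ih =>
      intro s hn
      obtain ⟨a0, ha0, hval⟩ := (hpl s).1
      by_cases hp : a0 = pass
      · refine ⟨fun _ => pass, ?_, fun _ _ => rfl, ?_⟩
        · intro k _
          rw [stall (fun _ => pass) s 0 k (Nat.zero_le k) (fun _ _ => rfl)]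
          exact hpassA s
        · rw [if_pos hp] at hval
          rw [stall (fun _ => pass) s 0 (ι s) (Nat.zero_le _) (fun _ _ => rfl)]
          simp [rollSeq, hrpass, hval]
      · obtain ⟨h1, h2⟩ := hdec s a0 ha0 hp
        rw [if_neg hp] at hval
        obtain ⟨b, hb1, hb2, hb3⟩ := ih (ι (T s a0)) (by omega) (T s a0) rfl
        refine ⟨fun k => Nat.rec a0 (fun j _ => b j) k, ?_, ?_, ?_⟩
        · intro k hk
          match k with
          | 0 => exact ha0
          | (j + 1) =>
            have hj : j < ι (T s a0) := by omega
            have := hb1 j hj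
            rw [shift]
            exact this
        · intro k hk
          match k with
          | 0 => omega
          | (j + 1) =>
            exact hb2 j (by omega)
        · have hι : ι s = ι (T s a0) + 1 := by omega
          have hrs : rollSeq T s (fun k => Nat.rec a0 (fun j _ => b j) k) (ι s)
              = rollSeq T (T s a0) b (ι (T s a0)) := by
            rw [hι, shift]; rfl
          have hsum : ∑ k ∈ Finset.range (ι s),
              rhat ((fun k => Nat.rec a0 (fun j _ => b j) k) k)
              = rhat a0 + ∑ k ∈ Finset.range (ι (T s a0)), rhat (b k) := by
            rw [hι, Finset.sum_range_succ']
            show (∑ k ∈ Finset.range (ι (T s a0)), rhat (b k)) + rhat a0 = _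
            ring
          rw [hsum, hrs, hval, hb3]
          ring
  intro s
  apply le_antisymm
  · -- htil s ≤ h s : realize htil s as the value of a feasible K-sequence
    obtain ⟨a, hf, hpa, hv⟩ := lemD (ι s) s rfl
    have hfeasK : FeasibleSeq T As K s a := by
      intro k hk
      by_cases hki : k < ι s
      · exact hf k hki
      · rw [hpa k (le_of_not_gt hki)]; exact hpassA _
    have hrollK : rollSeq T s a K = rollSeq T s a (ι s) := stall a s (ι s) K (hιK s) hpa
    have hsumK : ∑ k ∈ Finset.range K, rhat (a k)
        = ∑ k ∈ Finset.range (ι s), rhat (a k) := by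
      have hz : ∑ k ∈ Finset.Ico (ι s) K, rhat (a k) = 0 :=
        Finset.sum_eq_zero fun k hk => by
          rw [hpa k (Finset.mem_Ico.mp hk).1, hrpass]
      rw [Finset.range_eq_Ico, ← Finset.sum_Ico_consecutive _ (Nat.zero_le _) (hιK s), hz,
        ← Finset.range_eq_Ico, add_zero]
    refine (hopt s).2 ⟨a, hfeasK, ?_⟩
    rw [hv]
    unfold seqReward postState
    rw [hrollK, hsumK]
  · -- h s ≤ htil s
    obtain ⟨a, hf, hv⟩ := (hopt s).1
    rw [hv]
    have := lemB K s a hf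
    simpa [seqReward, postState] using this
end

section
/- Assume the passing structure and suppose g ∈ ℝ and h : S → ℝ satisfy the self-referential passing-last equation. Let π̃ : S → A be a deterministic step-independent atomic policy such that π̃(s) attains the maximum in this equation for every s. Then: (i) from every s ∈ S, the iteration u_1 = s, u_{m+1} = T(u_m, π̃(u_m)) reaches, after at most ι(s) non-passing steps, a state u with π̃(u) = 0; (ii) the induced per-period reward vector r_π̃ and transition matrix P_π̃ satisfy h(s) = r_π̃(s) − g + Σ_{s' ∈ S} P_π̃(s, s') h(s') for every s; and (iii) consequently lim_{T→∞} (1/T) Σ_{t=0}^{T−1} (P_π̃^t r_π̃)(s) = g for every s ∈ S (Lemma 5, second part: the greedy deterministic step-independent atomic policy achieves long-run average reward g). -/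
open Filter Finset Matrix

section Aux

variable {S A : Type*}

lemma rollDep_const_succ' (T : S → A → S) (pol : S → A) (s : S) (n : ℕ) :
    rollDep T (fun _ => pol) s (n + 1) = rollDep T (fun _ => pol) (T s (pol s)) n := by
  induction n with
  | zero => rfl
  | succ n ih => show T _ _ = T _ _; rw [ih]

lemma rollDep_const_add (T : S → A → S) (pol : S → A) (s : S) (m n : ℕ) :
    rollDep T (fun _ => pol) s (m + n)
      = rollDep T (fun _ => pol) (rollDep T (fun _ => pol) s m) n := by
  induction n with
  | zero => rfl
  | succ n ih => exact congrArg (fun u => T u (pol u)) ih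

lemma rollDep_fix (T : S → A → S) (pol : S → A) (u : S) (hu : T u (pol u) = u) :
    ∀ n, rollDep T (fun _ => pol) u n = u := by
  intro n
  induction n with
  | zero => rfl
  | succ n ih => show T _ _ = _; rw [ih, hu]

lemma reach_pass (T : S → A → S) (pol : S → A) (pass : A) (ι : S → ℕ)
    (hstep : ∀ s, pol s ≠ pass → 1 ≤ ι s ∧ ι (T s (pol s)) = ι s - 1) :
    ∀ n s, ι s ≤ n → ∃ m, m ≤ ι s ∧ pol (rollDep T (fun _ => pol) s m) = pass ∧
      ∀ j, j < m → pol (rollDep T (fun _ => pol) s j) ≠ pass := by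
  intro n
  induction n with
  | zero =>
    intro s hs
    by_cases hp : pol s = pass
    · exact ⟨0, Nat.zero_le _, hp, fun j hj => absurd hj (Nat.not_lt_zero j)⟩
    · exact absurd (Nat.le_trans (hstep s hp).1 hs) (by norm_num)
  | succ n ih =>
    intro s hs
    by_cases hp : pol s = pass
    · exact ⟨0, Nat.zero_le _, hp, fun j hj => absurd hj (Nat.not_lt_zero j)⟩
    · obtain ⟨h1, h2⟩ := hstep s hp
      have hle : ι (T s (pol s)) ≤ n := by omega
      obtain ⟨m, hm, hmp, hmj⟩ := ih (T s (pol s)) hle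
      refine ⟨m + 1, by omega, ?_, ?_⟩
      · rw [rollDep_const_succ']; exact hmp
      · intro j hj
        cases j with
        | zero => exact hp
        | succ j => rw [rollDep_const_succ']; exact hmj j (by omega)

lemma rowStochastic_pow {S : Type*} [Fintype S] [DecidableEq S] {P : Matrix S S ℝ}
    (hP : RowStochastic P) (n : ℕ) : RowStochastic (P ^ n) := by
  induction n with
  | zero =>
    constructor
    · intro s s'
      simp [Matrix.one_apply]
      split <;> norm_num
    · intro s; simp [Matrix.one_apply]
  | succ n ih =>
    rw [pow_succ]
    constructor
    · intro s s'
      exact Finset.sum_nonneg fun t _ => mul_nonneg (ih.1 s t) (hP.1 t s')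
    · intro s
      simp only [Matrix.mul_apply]
      rw [Finset.sum_comm]
      calc ∑ t, ∑ s', (P ^ n) s t * P t s'
          = ∑ t, (P ^ n) s t * ∑ s', P t s' := by
            simp [Finset.mul_sum]
        _ = 1 := by simp [hP.2, ih.2 s]

lemma mulVec_bound {S : Type*} [Fintype S] [Nonempty S] {P : Matrix S S ℝ}
    (hP : RowStochastic P) (v : S → ℝ) (M : ℝ) (hM : ∀ s, |v s| ≤ M) (s : S) :
    |(P *ᵥ v) s| ≤ M := by
  have : |(P *ᵥ v) s| ≤ ∑ s', P s s' * |v s'| := by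
    refine (Finset.abs_sum_le_sum_abs _ _).trans ?_
    refine Finset.sum_le_sum fun s' _ => ?_
    rw [abs_mul, abs_of_nonneg (hP.1 s s')]
  refine this.trans ?_
  calc ∑ s', P s s' * |v s'| ≤ ∑ s', P s s' * M :=
        Finset.sum_le_sum fun s' _ => mul_le_mul_of_nonneg_left (hM s') (hP.1 s s')
    _ = M := by rw [← Finset.sum_mul, hP.2 s, one_mul]

end Aux

/-- **Lemma 5, second part**: under the passing structure, if `(g, h)` solves the
self-referential passing-last equation and `pol` is a greedy deterministic step-independent
atomic policy for it, then from every state the rollout reaches a passing state after at most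
`ι s` (non-passing) steps, `(g, h)` satisfies the policy evaluation equation of `pol`, and `pol`
attains the long-run average reward `g` from every state. -/
theorem stmt9 {S A : Type*} [Fintype S] [DecidableEq S] [Nonempty S] [Fintype A] [DecidableEq A]
    (T : S → A → S) (As : S → Finset A) (hAs : ∀ s, (As s).Nonempty)
    (rhat : A → ℝ) (rH : S → ℝ) (Psys : Matrix S S ℝ) (hPsys : RowStochastic Psys)
    (K : ℕ) (hK : 1 ≤ K) (pass : A) (ι : S → ℕ)
    (hpass : PassingStruct T As rhat K pass ι)
    (g : ℝ) (h : S → ℝ) (heq : PassLastEq T As rhat rH Psys pass g h h)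
    (pol : S → A) (hpol : ∀ u, pol u ∈ As u)
    (hgreedy : ∀ s, h s = if pol s = pass then rH s - g + ∑ s', Psys s s' * h s'
        else rhat (pol s) + h (T s (pol s))) :
    (∀ s : S, ∃ m, m ≤ ι s ∧ pol (rollDep T (fun _ => pol) s m) = pass ∧
      ∀ j, j < m → pol (rollDep T (fun _ => pol) s j) ≠ pass) ∧
    (∀ s, h s = indR T rhat rH K pol s - g + ∑ s', indP T Psys K pol s s' * h s') ∧
    (∀ s, Filter.Tendsto (avgRew (indP T Psys K pol) (indR T rhat rH K pol) s)
      Filter.atTop (nhds g)) := by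
  obtain ⟨hpassAs, hTpass, hrpass, hiK, hstep', hi0⟩ := hpass
  have hstep : ∀ s, pol s ≠ pass → 1 ≤ ι s ∧ ι (T s (pol s)) = ι s - 1 :=
    fun s hne => hstep' s (pol s) (hpol s) hne
  have part1 : ∀ s : S, ∃ m, m ≤ ι s ∧ pol (rollDep T (fun _ => pol) s m) = pass ∧
      ∀ j, j < m → pol (rollDep T (fun _ => pol) s j) ≠ pass :=
    fun s => reach_pass T pol pass ι hstep (ι s) s le_rfl
  have part2 : ∀ s, h s = indR T rhat rH K pol s - g + ∑ s', indP T Psys K pol s s' * h s' := by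
    intro s
    obtain ⟨m, hmi, hmp, hmj⟩ := part1 s
    have hmK : m ≤ K := hmi.trans (hiK s)
    set roll := rollDep T (fun _ : ℕ => pol) s with hroll
    have hufix : ∀ j, rollDep T (fun _ => pol) (roll m) j = roll m := by
      refine rollDep_fix T pol (roll m) ?_
      rw [hmp, hTpass]
    have hrollk : ∀ k, m ≤ k → roll k = roll m := by
      intro k hk
      have h2 := rollDep_const_add T pol s m (k - m)
      rw [Nat.add_sub_cancel' hk] at h2
      rw [hroll, h2, hufix]
    have hchain : ∀ k, k ≤ m →
        h s = (∑ i ∈ Finset.range k, rhat (pol (roll i))) + h (roll k) := by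
      intro k hk
      induction k with
      | zero => simp [hroll, rollDep]
      | succ k ih =>
        have hne : pol (roll k) ≠ pass := hmj k (by omega)
        rw [ih (by omega), Finset.sum_range_succ]
        have hg := hgreedy (roll k)
        rw [if_neg hne] at hg
        have hnext : roll (k + 1) = T (roll k) (pol (roll k)) := rfl
        rw [hnext, hg]; ring
    have hhs : h s = (∑ i ∈ Finset.range m, rhat (pol (roll i))) + h (roll m) :=
      hchain m le_rfl
    have hgu := hgreedy (roll m)
    rw [if_pos hmp] at hgu
    have hsum : ∑ k ∈ Finset.range K, rhat (pol (roll k))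
        = ∑ i ∈ Finset.range m, rhat (pol (roll i)) := by
      rw [← Finset.sum_range_add_sum_Ico _ hmK]
      have hz : ∑ k ∈ Finset.Ico m K, rhat (pol (roll k)) = 0 := by
        refine Finset.sum_eq_zero fun k hk => ?_
        rw [hrollk k (Finset.mem_Ico.mp hk).1, hmp, hrpass]
      rw [hz, add_zero]
    have hrollK : roll K = roll m := hrollk K hmK
    have hR : indR T rhat rH K pol s
        = (∑ i ∈ Finset.range m, rhat (pol (roll i))) + rH (roll m) := by
      show (∑ k ∈ Finset.range K, rhat (pol (roll k))) + rH (roll K) = _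
      rw [hsum, hrollK]
    have hP : ∀ s', indP T Psys K pol s s' = Psys (roll m) s' := by
      intro s'
      show Psys (roll K) s' = _
      rw [hrollK]
    have hsum2 : ∑ s', indP T Psys K pol s s' * h s' = ∑ s', Psys (roll m) s' * h s' :=
      Finset.sum_congr rfl fun s' _ => by rw [hP s']
    rw [hR, hsum2, hhs, hgu]; ring
  refine ⟨part1, part2, ?_⟩
  set P := indP T Psys K pol with hPdef
  set r := indR T rhat rH K pol with hrdef
  have hPst : RowStochastic P := by
    constructor
    · intro s s'; exact hPsys.1 _ s'
    · intro s; exact hPsys.2 _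
  have hmv : ∀ (Q : Matrix S S ℝ) (v : S → ℝ) (s : S), (Q *ᵥ v) s = ∑ s', Q s s' * v s' :=
    fun Q v s => rfl
  have hEval : ∀ s, r s = g + h s - (P *ᵥ h) s := by
    intro s
    have h2 := part2 s
    rw [hmv]; linarith
  have hTel : ∀ n s, ∑ t ∈ Finset.range n, ((P ^ t) *ᵥ r) s
      = n * g + h s - ((P ^ n) *ᵥ h) s := by
    intro n s
    induction n with
    | zero => simp [Matrix.one_mulVec]
    | succ n ih =>
      rw [Finset.sum_range_succ, ih]
      have hst := rowStochastic_pow hPst n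
      have h1 : ((P ^ n) *ᵥ r) s = g + ((P ^ n) *ᵥ h) s - ((P ^ (n + 1)) *ᵥ h) s := by
        have hpow : ((P ^ (n + 1)) *ᵥ h) s = ∑ s', (P ^ n) s s' * (P *ᵥ h) s' := by
          rw [pow_succ, ← Matrix.mulVec_mulVec, hmv]
        calc ((P ^ n) *ᵥ r) s = ∑ s', (P ^ n) s s' * (g + h s' - (P *ᵥ h) s') := by
              rw [hmv]
              exact Finset.sum_congr rfl fun s' _ => by rw [hEval s']
          _ = (∑ s', (P ^ n) s s' * g) + (∑ s', (P ^ n) s s' * h s')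
                - ∑ s', (P ^ n) s s' * (P *ᵥ h) s' := by
              rw [← Finset.sum_add_distrib, ← Finset.sum_sub_distrib]
              exact Finset.sum_congr rfl fun s' _ => by ring
          _ = g + ((P ^ n) *ᵥ h) s - ((P ^ (n + 1)) *ᵥ h) s := by
              rw [hpow, hmv, ← Finset.sum_mul, hst.2 s, one_mul]
      rw [h1]; push_cast; ring
  intro s
  set M : ℝ := ∑ s', |h s'| with hM
  have hMb : ∀ t, |h t| ≤ M := by
    intro t
    exact Finset.single_le_sum (fun i _ => abs_nonneg (h i)) (Finset.mem_univ t)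
  have hbnd : ∀ n : ℕ, |h s - ((P ^ n) *ᵥ h) s| ≤ 2 * M := by
    intro n
    have h1 := mulVec_bound (rowStochastic_pow hPst n) h M hMb s
    have h2 := hMb s
    calc |h s - ((P ^ n) *ᵥ h) s| ≤ |h s| + |((P ^ n) *ᵥ h) s| := abs_sub _ _
      _ ≤ 2 * M := by linarith
  have hz : Filter.Tendsto (fun n : ℕ => (n : ℝ)⁻¹ * (h s - ((P ^ n) *ᵥ h) s))
      Filter.atTop (nhds 0) := by
    have hb : ∀ n : ℕ, ‖(n : ℝ)⁻¹ * (h s - ((P ^ n) *ᵥ h) s)‖ ≤ 2 * M * (n : ℝ)⁻¹ := by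
      intro n
      rw [norm_mul, norm_inv, Real.norm_natCast, Real.norm_eq_abs, mul_comm]
      exact mul_le_mul_of_nonneg_right (hbnd n) (by positivity)
    have hg0 : Filter.Tendsto (fun n : ℕ => 2 * M * (n : ℝ)⁻¹) Filter.atTop (nhds 0) := by
      have := tendsto_inv_atTop_nhds_zero_nat.const_mul (2 * M)
      simpa using this
    exact squeeze_zero_norm hb hg0
  have hlim : Filter.Tendsto (fun n : ℕ => g + (n : ℝ)⁻¹ * (h s - ((P ^ n) *ᵥ h) s))
      Filter.atTop (nhds g) := by
    have hc : Filter.Tendsto (fun _ : ℕ => g) Filter.atTop (nhds g) := tendsto_const_nhds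
    simpa using hc.add hz
  refine hlim.congr' ?_
  filter_upwards [Filter.eventually_ge_atTop 1] with n hn
  have hn0 : (n : ℝ) ≠ 0 := by positivity
  rw [avgRew, hTel n s]
  field_simp
  ring
end

section
/- Let S be a nonempty finite type, let A and Q be row-stochastic real matrices indexed by S × S, let ρ : S → ℝ, and suppose the matrix powers Q^t converge entrywise as t → ∞ to the matrix whose (s, s') entry is ρ(s') (all rows equal to ρ). Then for every w : S → ℝ and every s ∈ S, the series Σ_{t=1}^∞ [ (A · Q^{t−1} · w)(s) − Σ_{s' ∈ S} ρ(s') w(s') ] converges absolutely (Proposition 1: the relative value function of an atomic action policy, defined as an infinite series of centered expected per-period rewards, is well defined). -/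
/-!
Let `L` be the matrix all of whose rows are `ρ`. Passing to the limit in
`Q ^ (t + 1) = Q * Q ^ t = Q ^ t * Q` gives `Q * L = L * Q = L`, hence `Q ^ t * L = L` and, in the
limit, `L * L = L`; so `Q ^ (t + 1) - L = (Q - L) ^ (t + 1)` tends to `0`. Some power of `Q - L`
then has operator norm `< 1`, and `‖Q ^ t - L‖` decays geometrically. Since `A * L = L`, the `t`-th
term of the series is the `s`-th entry of `(A * (Q ^ t - L)) *ᵥ w`, at most
`‖A‖ ‖Q ^ t - L‖ ‖w‖`.
-/

open Filter Finset Matrix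

open Topology

theorem norm_pow_mul_add_le {R : Type*} [SeminormedRing R] (x : R) (N k r : ℕ) :
    ‖x ^ (k * N + r)‖ ≤ ‖x ^ N‖ ^ k * ‖x ^ r‖ := by
  induction k with
  | zero => simp
  | succ k ih =>
    calc ‖x ^ ((k + 1) * N + r)‖ = ‖x ^ N * x ^ (k * N + r)‖ := by
          rw [← pow_add]; ring_nf
      _ ≤ ‖x ^ N‖ * (‖x ^ N‖ ^ k * ‖x ^ r‖) :=
          (norm_mul_le _ _).trans (mul_le_mul_of_nonneg_left ih (norm_nonneg _))
      _ = ‖x ^ N‖ ^ (k + 1) * ‖x ^ r‖ := by ring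

theorem summable_norm_pow_of_tendsto_zero {R : Type*} [SeminormedRing R] {x : R}
    (h : Tendsto (fun n : ℕ => x ^ n) atTop (𝓝 0)) : Summable fun n : ℕ => ‖x ^ n‖ := by
  obtain ⟨N, hN, hNpos⟩ : ∃ N, ‖x ^ N‖ < 1 ∧ 0 < N := by
    have hnorm : Tendsto (fun n : ℕ => ‖x ^ n‖) atTop (𝓝 0) := by simpa using h.norm
    exact ((hnorm.eventually_lt_const one_pos).and (eventually_gt_atTop 0)).exists
  have : NeZero N := ⟨hNpos.ne'⟩
  have hblocks : Summable fun p : ℕ × Fin N => ‖x ^ N‖ ^ p.1 * ‖x ^ (p.2 : ℕ)‖ :=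
    Summable.mul_of_nonneg (f := fun k : ℕ => ‖x ^ N‖ ^ k) (g := fun r : Fin N => ‖x ^ (r : ℕ)‖)
      (summable_geometric_of_lt_one (norm_nonneg _) hN) Summable.of_finite
      (fun _ => pow_nonneg (norm_nonneg _) _) (fun _ => norm_nonneg _)
  rw [← (Nat.divModEquiv N).symm.summable_iff]
  exact hblocks.of_nonneg_of_le (fun _ => norm_nonneg _) fun p => norm_pow_mul_add_le x N p.1 p.2

theorem sub_pow_succ_of_mul_eq {R : Type*} [Ring R] {q l : R} (hql : q * l = l)
    (hlq : l * q = l) (hll : l * l = l) (n : ℕ) : (q - l) ^ (n + 1) = q ^ (n + 1) - l := by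
  have hlqn : ∀ n : ℕ, l * q ^ n = l := fun n => by
    induction n with
    | zero => simp
    | succ n ih => rw [pow_succ, ← mul_assoc, ih, hlq]
  induction n with
  | zero => simp
  | succ n ih =>
    rw [pow_succ', ih, pow_succ' q (n + 1)]
    simp only [sub_mul, mul_sub, hql, hlqn, hll]
    abel

theorem summable_norm_pow_sub_of_tendsto {R : Type*} [NormedRing R] {q l : R}
    (h : Tendsto (fun n : ℕ => q ^ n) atTop (𝓝 l)) : Summable fun n => ‖q ^ n - l‖ := by
  have hsucc : Tendsto (fun n => q ^ (n + 1)) atTop (𝓝 l) := h.comp (tendsto_add_atTop_nat 1)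
  have hql : q * l = l := tendsto_nhds_unique (h.const_mul q) (by simpa [pow_succ'] using hsucc)
  have hlq : l * q = l := tendsto_nhds_unique (h.mul_const q) (by simpa [pow_succ] using hsucc)
  have hqnl : ∀ n : ℕ, q ^ n * l = l := fun n => by
    induction n with
    | zero => simp
    | succ n ih => rw [pow_succ', mul_assoc, ih, hql]
  have hll : l * l = l := tendsto_nhds_unique (h.mul_const l) (by simp [hqnl])
  have hpow : ∀ n, (q - l) ^ (n + 1) = q ^ (n + 1) - l := sub_pow_succ_of_mul_eq hql hlq hll
  have hzero : Tendsto (fun n : ℕ => (q - l) ^ n) atTop (𝓝 0) := by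
    rw [← tendsto_add_atTop_iff_nat 1]
    simpa [hpow] using hsucc.sub_const l
  rw [← summable_nat_add_iff 1]
  simpa [hpow] using (summable_nat_add_iff 1).2 (summable_norm_pow_of_tendsto_zero hzero)

theorem Matrix.mul_replicateRow_of_sum_row_eq_one {l m n α : Type*} [Fintype m]
    [NonAssocSemiring α] {M : Matrix l m α} (hM : ∀ i, ∑ j, M i j = 1) (v : n → α) :
    M * replicateRow m v = replicateRow l v := by
  ext i j
  simp [mul_apply, ← Finset.sum_mul, hM]

theorem stmt10_general {S : Type*} [Fintype S] [DecidableEq S]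
    (A Q : Matrix S S ℝ) (hA : RowStochastic A)
    (ρ : S → ℝ)
    (hconv : Filter.Tendsto (fun t : ℕ => Q ^ t) Filter.atTop
      (nhds (Matrix.of fun _ s' => ρ s'))) :
    ∀ w : S → ℝ, ∀ s : S,
      Summable (fun t : ℕ => |((A * Q ^ t) *ᵥ w) s - ∑ s', ρ s' * w s'|) := by
  intro w s
  let _ : NormedRing (Matrix S S ℝ) := Matrix.linftyOpNormedRing
  set L := replicateRow S ρ
  have hAL : A * L = L := mul_replicateRow_of_sum_row_eq_one hA.2 ρ
  have hterm : ∀ t, ((A * Q ^ t) *ᵥ w) s - ∑ s', ρ s' * w s' = ((A * (Q ^ t - L)) *ᵥ w) s := by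
    intro t
    rw [mul_sub, sub_mulVec, hAL]
    rfl
  have hbound : ∀ t, |((A * Q ^ t) *ᵥ w) s - ∑ s', ρ s' * w s'| ≤ ‖A‖ * ‖w‖ * ‖Q ^ t - L‖ := by
    intro t
    rw [hterm, ← Real.norm_eq_abs]
    calc ‖((A * (Q ^ t - L)) *ᵥ w) s‖ ≤ ‖A * (Q ^ t - L)‖ * ‖w‖ :=
          (norm_le_pi_norm _ s).trans (linfty_opNorm_mulVec _ _)
      _ ≤ ‖A‖ * ‖Q ^ t - L‖ * ‖w‖ := by gcongr; exact linfty_opNorm_mul _ _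
      _ = ‖A‖ * ‖w‖ * ‖Q ^ t - L‖ := by ring
  exact ((summable_norm_pow_sub_of_tendsto hconv).mul_left _).of_nonneg_of_le
    (fun _ => abs_nonneg _) hbound

/-- **Proposition 1** (well-definedness of the relative value function): if the powers of the
row-stochastic matrix `Q` converge entrywise to the matrix all of whose rows equal `ρ`, then for
every vector `w` and state `s` the series of centered expected per-period rewards
`Σ_t [(A · Q^t · w)(s) − Σ_{s'} ρ(s') w(s')]` converges absolutely. -/
theorem stmt10 {S : Type*} [Fintype S] [DecidableEq S] [Nonempty S]
    (A Q : Matrix S S ℝ) (hA : RowStochastic A) (hQ : RowStochastic Q)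
    (ρ : S → ℝ)
    (hconv : Filter.Tendsto (fun t : ℕ => Q ^ t) Filter.atTop
      (nhds (Matrix.of fun _ s' => ρ s'))) :
    ∀ w : S → ℝ, ∀ s : S,
      Summable (fun t : ℕ => |((A * Q ^ t) *ᵥ w) s - ∑ s', ρ s' * w s'|) :=
  stmt10_general A Q hA ρ hconv
end

section
/- Let K ≥ 1 be an integer. For each ℓ ∈ {1, …, K} let (x_{t,ℓ})_{t≥1} be a real sequence with x_{t,ℓ} → m_ℓ as t → ∞, and let (y_t)_{t≥1} be a real sequence with y_t → m_y as t → ∞. Suppose the series Σ_{t=1}^∞ ( Σ_{ℓ=1}^K x_{t,ℓ} + y_t ) converges, with sum L. Then lim_{D→∞} (1/(DK)) Σ_{T=1}^D Σ_{q=1}^K [ Σ_{t=1}^{T−1} ( Σ_{ℓ=1}^K x_{t,ℓ} + y_t ) + Σ_{ℓ=1}^q x_{T,ℓ} + y_T ] = L − (1/K) Σ_{ℓ=1}^K (ℓ−1) m_ℓ (Proposition 2: the series-based relative value function and the Cesàro-limit-based relative value function of an atomic policy differ by the explicit constant κ = −(1/K) Σ_{ℓ=1}^K (ℓ−1) m_ℓ).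 -/
/-!
Averaging over the final offset `q` inside period `T` gives `S (T + 1) - K⁻¹ * ∑ ℓ, ℓ * x T ℓ`,
where `S` are the partial sums of the series: the reward of step `ℓ` is missing from exactly the
`ℓ` partial periods with `q < ℓ`. This sequence tends to `L - K⁻¹ * ∑ ℓ, ℓ * m ℓ`, and the outer
average over `T` is a Cesàro mean, which preserves the limit.
-/

open Filter Finset Matrix

open Topology

theorem Finset.sum_range_sum_range_succ {R : Type*} [CommRing R] (K : ℕ) (f : ℕ → R) :
    ∑ q ∈ range K, ∑ ℓ ∈ range (q + 1), f ℓ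
      = K * ∑ ℓ ∈ range K, f ℓ - ∑ ℓ ∈ range K, (ℓ : R) * f ℓ := by
  induction K with
  | zero => simp
  | succ K ih =>
    simp only [sum_range_succ _ K, ih]
    push_cast
    ring

theorem Finset.sum_range_add_sum_range_succ_add {R : Type*} [CommRing R] (K : ℕ) (s y : R)
    (f : ℕ → R) :
    ∑ q ∈ range K, (s + ∑ ℓ ∈ range (q + 1), f ℓ + y)
      = K * (s + ∑ ℓ ∈ range K, f ℓ + y) - ∑ ℓ ∈ range K, (ℓ : R) * f ℓ := by
  simp only [sum_add_distrib, sum_const, card_range, nsmul_eq_mul, sum_range_sum_range_succ]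
  ring

theorem Filter.Tendsto.cesaro_const_mul {a : ℕ → ℝ} {l c : ℝ} (hc : c ≠ 0)
    (h : Tendsto a atTop (𝓝 l)) :
    Tendsto (fun D : ℕ => ((D : ℝ) * c)⁻¹ * ∑ T ∈ range D, c * a T) atTop (𝓝 l) := by
  refine h.cesaro.congr fun D => ?_
  rw [← mul_sum, mul_inv, mul_assoc, inv_mul_cancel_left₀ hc]

theorem stmt11_general (K : ℕ) (hK : 1 ≤ K) (x : ℕ → ℕ → ℝ) (m : ℕ → ℝ) (y : ℕ → ℝ) (L : ℝ)
    (hx : ∀ ℓ, ℓ < K → Filter.Tendsto (fun t => x t ℓ) Filter.atTop (nhds (m ℓ)))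
    (hL : Filter.Tendsto
      (fun n => ∑ t ∈ Finset.range n, ((∑ ℓ ∈ Finset.range K, x t ℓ) + y t))
      Filter.atTop (nhds L)) :
    Filter.Tendsto
      (fun D : ℕ => ((D : ℝ) * (K : ℝ))⁻¹ * ∑ T ∈ Finset.range D, ∑ q ∈ Finset.range K,
        ((∑ t ∈ Finset.range T, ((∑ ℓ ∈ Finset.range K, x t ℓ) + y t))
          + (∑ ℓ ∈ Finset.range (q + 1), x T ℓ) + y T))
      Filter.atTop
      (nhds (L - (K : ℝ)⁻¹ * ∑ ℓ ∈ Finset.range K, (ℓ : ℝ) * m ℓ)) := by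
  have hK₀ : (K : ℝ) ≠ 0 := by positivity
  set S : ℕ → ℝ := fun n => ∑ t ∈ range n, ((∑ ℓ ∈ range K, x t ℓ) + y t)
  have hperiod : ∀ T, ∑ q ∈ range K, (S T + ∑ ℓ ∈ range (q + 1), x T ℓ + y T)
      = K * (S (T + 1) - (K : ℝ)⁻¹ * ∑ ℓ ∈ range K, (ℓ : ℝ) * x T ℓ) := by
    intro T
    rw [sum_range_add_sum_range_succ_add, mul_sub, mul_inv_cancel_left₀ hK₀]
    simp only [S, sum_range_succ _ T, add_assoc]
  have hlim : Tendsto (fun T => S (T + 1) - (K : ℝ)⁻¹ * ∑ ℓ ∈ range K, (ℓ : ℝ) * x T ℓ) atTop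
      (𝓝 (L - (K : ℝ)⁻¹ * ∑ ℓ ∈ range K, (ℓ : ℝ) * m ℓ)) :=
    (hL.comp (tendsto_add_atTop_nat 1)).sub <| tendsto_const_nhds.mul <|
      tendsto_finsetSum _ fun ℓ hℓ => tendsto_const_nhds.mul (hx ℓ (mem_range.mp hℓ))
  refine (hlim.cesaro_const_mul hK₀).congr fun D => ?_
  exact congrArg _ (sum_congr rfl fun T _ => (hperiod T).symm)

/-- **Proposition 2**: if `x t ℓ → m ℓ` for each atomic step `ℓ < K`, `y t → my`, and the series
`Σ_t (Σ_{ℓ<K} x t ℓ + y t)` converges with sum `L`, then the double Cesàro average appearing in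
the Cesàro-limit definition of the relative value function converges to
`L − (1/K) Σ_{ℓ<K} ℓ · m ℓ`. -/
theorem stmt11 (K : ℕ) (hK : 1 ≤ K) (x : ℕ → ℕ → ℝ) (m : ℕ → ℝ) (y : ℕ → ℝ) (my L : ℝ)
    (hx : ∀ ℓ, ℓ < K → Filter.Tendsto (fun t => x t ℓ) Filter.atTop (nhds (m ℓ)))
    (hy : Filter.Tendsto y Filter.atTop (nhds my))
    (hL : Filter.Tendsto
      (fun n => ∑ t ∈ Finset.range n, ((∑ ℓ ∈ Finset.range K, x t ℓ) + y t))
      Filter.atTop (nhds L)) :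
    Filter.Tendsto
      (fun D : ℕ => ((D : ℝ) * (K : ℝ))⁻¹ * ∑ T ∈ Finset.range D, ∑ q ∈ Finset.range K,
        ((∑ t ∈ Finset.range T, ((∑ ℓ ∈ Finset.range K, x t ℓ) + y t))
          + (∑ ℓ ∈ Finset.range (q + 1), x T ℓ) + y T))
      Filter.atTop
      (nhds (L - (K : ℝ)⁻¹ * ∑ ℓ ∈ Finset.range K, (ℓ : ℝ) * m ℓ)) :=
  stmt11_general K hK x m y L hx hL
end

section
/- Let n be a nonempty finite type and let M be an n × n real matrix such that the matrix powers M^t converge entrywise as t → ∞ to a matrix Π. Then there exist C ≥ 0 and γ ∈ (0, 1) such that |(M^t − Π)(i, j)| ≤ C γ^t for all t ≥ 0 and all indices i, j (geometric convergence of matrix powers to their limit, the Perron–Frobenius-type estimate used in the proof of Proposition 1). -/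
/-!
If `a ^ t → p`, then `p` is an idempotent absorbing `a` on both sides, so
`a ^ t - p = (a - p) ^ t * (1 - p)` and `(a - p) ^ t → 0`. In a normed ring some power
`(a - p) ^ k` then has norm at most `1 / 2`, and submultiplicativity of the norm turns this into
the geometric rate `γ = (1 / 2) ^ (1 / k)`.
For matrices, the `L∞` operator norm is submultiplicative and dominates every entry.
-/

open Filter Finset Matrix

open scoped Topology

theorem mul_pow_eq_self_of_mul_eq_self {M : Type*} [Monoid M] {a p : M} (h : p * a = p) (t : ℕ) :
    p * a ^ t = p := by
  induction t with
  | zero => simp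
  | succ t ih => rw [pow_succ, ← mul_assoc, ih, h]

section LimitOfPowers

variable {R : Type*} [Ring R] [TopologicalSpace R] [IsTopologicalRing R] [T2Space R] {a p : R}

theorem mul_eq_self_of_tendsto_pow (h : Tendsto (fun t : ℕ => a ^ t) atTop (𝓝 p)) : a * p = p :=
  tendsto_nhds_unique (by simpa only [pow_succ'] using tendsto_const_nhds.mul h)
    ((tendsto_add_atTop_iff_nat 1).mpr h)

theorem mul_eq_self_of_tendsto_pow' (h : Tendsto (fun t : ℕ => a ^ t) atTop (𝓝 p)) : p * a = p :=
  tendsto_nhds_unique (by simpa only [pow_succ] using h.mul tendsto_const_nhds)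
    ((tendsto_add_atTop_iff_nat 1).mpr h)

theorem isIdempotentElem_of_tendsto_pow (h : Tendsto (fun t : ℕ => a ^ t) atTop (𝓝 p)) :
    IsIdempotentElem p :=
  tendsto_nhds_unique (tendsto_const_nhds.mul h) <| by
    simp only [mul_pow_eq_self_of_mul_eq_self (mul_eq_self_of_tendsto_pow' h)]
    exact tendsto_const_nhds

theorem one_sub_mul_eq_sub_of_tendsto_pow (h : Tendsto (fun t : ℕ => a ^ t) atTop (𝓝 p)) :
    (1 - p) * a = a - p := by
  rw [sub_mul, one_mul, mul_eq_self_of_tendsto_pow' h]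

theorem pow_sub_eq_sub_pow_mul_of_tendsto_pow (h : Tendsto (fun t : ℕ => a ^ t) atTop (𝓝 p))
    (t : ℕ) : a ^ t - p = (a - p) ^ t * (1 - p) := by
  have hp : (a - p) * (1 - p) = a - p := by
    rw [mul_sub, mul_one, sub_mul, mul_eq_self_of_tendsto_pow h,
      (isIdempotentElem_of_tendsto_pow h).eq, sub_self, sub_zero]
  induction t with
  | zero => simp
  | succ t ih =>
    calc a ^ (t + 1) - p = (a ^ t - p) * a := by
          rw [pow_succ, sub_mul, mul_eq_self_of_tendsto_pow' h]
      _ = (a - p) ^ t * ((a - p) * (1 - p)) := by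
          rw [ih, mul_assoc, one_sub_mul_eq_sub_of_tendsto_pow h, hp]
      _ = (a - p) ^ (t + 1) * (1 - p) := by rw [pow_succ, mul_assoc]

theorem tendsto_sub_pow_zero_of_tendsto_pow (h : Tendsto (fun t : ℕ => a ^ t) atTop (𝓝 p)) :
    Tendsto (fun t : ℕ => (a - p) ^ t) atTop (𝓝 0) := by
  have hsucc (t : ℕ) : (a - p) ^ (t + 1) = (a ^ t - p) * a := by
    rw [pow_sub_eq_sub_pow_mul_of_tendsto_pow h, mul_assoc, one_sub_mul_eq_sub_of_tendsto_pow h,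
      pow_succ]
  refine (tendsto_add_atTop_iff_nat 1).mp ?_
  simpa only [hsucc, sub_self, zero_mul] using (h.sub_const p).mul_const a

end LimitOfPowers

section NormedRing

variable {R : Type*} [NormedRing R]

theorem norm_pow_le_geometric_of_norm_pow_le {a : R} {k : ℕ} {C γ : ℝ} (hk : 0 < k) (hγ : 0 ≤ γ)
    (hak : ‖a ^ k‖ ≤ γ ^ k) (hsmall : ∀ r < k, ‖a ^ r‖ ≤ C * γ ^ r) (t : ℕ) :
    ‖a ^ t‖ ≤ C * γ ^ t := by
  induction t using Nat.strong_induction_on with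
  | _ t ih =>
    rcases lt_or_ge t k with ht | ht
    · exact hsmall t ht
    obtain ⟨s, rfl⟩ := Nat.exists_eq_add_of_le ht
    calc ‖a ^ (k + s)‖ ≤ ‖a ^ k‖ * ‖a ^ s‖ := by rw [pow_add]; exact norm_mul_le _ _
      _ ≤ γ ^ k * (C * γ ^ s) := mul_le_mul hak (ih s (by omega)) (norm_nonneg _) (by positivity)
      _ = C * γ ^ (k + s) := by ring

theorem exists_norm_pow_le_geometric_of_tendsto_zero {a : R}
    (h : Tendsto (fun t : ℕ => a ^ t) atTop (𝓝 0)) :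
    ∃ C γ : ℝ, 0 ≤ C ∧ 0 < γ ∧ γ < 1 ∧ ∀ t : ℕ, ‖a ^ t‖ ≤ C * γ ^ t := by
  obtain ⟨k, hak, hk⟩ : ∃ k : ℕ, ‖a ^ k‖ ≤ 1 / 2 ∧ 0 < k :=
    ((h.norm.eventually (ge_mem_nhds (by norm_num : ‖(0 : R)‖ < 1 / 2))).and
      (eventually_gt_atTop 0)).exists
  set γ : ℝ := (1 / 2) ^ (k⁻¹ : ℝ)
  have hγ0 : 0 < γ := by positivity
  have hγk : γ ^ k = 1 / 2 := Real.rpow_inv_natCast_pow (by norm_num) hk.ne'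
  have hγ1 : γ < 1 := Real.rpow_lt_one (by norm_num) (by norm_num) (by positivity)
  set B := ∑ r ∈ range k, ‖a ^ r‖
  refine ⟨2 * B, γ, by positivity, hγ0, hγ1,
    norm_pow_le_geometric_of_norm_pow_le hk hγ0.le (hγk ▸ hak) fun r hr => ?_⟩
  have hγr : 1 / 2 ≤ γ ^ r := hγk ▸ pow_le_pow_of_le_one hγ0.le hγ1.le hr.le
  calc ‖a ^ r‖ ≤ B := single_le_sum (fun _ _ => norm_nonneg _) (mem_range.mpr hr)
    _ ≤ 2 * B * γ ^ r := by nlinarith [sum_nonneg fun r (_ : r ∈ range k) => norm_nonneg (a ^ r)]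

theorem exists_norm_pow_sub_le_geometric_of_tendsto_pow {a p : R}
    (h : Tendsto (fun t : ℕ => a ^ t) atTop (𝓝 p)) :
    ∃ C γ : ℝ, 0 ≤ C ∧ 0 < γ ∧ γ < 1 ∧ ∀ t : ℕ, ‖a ^ t - p‖ ≤ C * γ ^ t := by
  obtain ⟨C, γ, hC, hγ0, hγ1, hbound⟩ :=
    exists_norm_pow_le_geometric_of_tendsto_zero (tendsto_sub_pow_zero_of_tendsto_pow h)
  refine ⟨C * ‖1 - p‖, γ, by positivity, hγ0, hγ1, fun t => ?_⟩
  calc ‖a ^ t - p‖ = ‖(a - p) ^ t * (1 - p)‖ := by rw [pow_sub_eq_sub_pow_mul_of_tendsto_pow h]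
    _ ≤ ‖(a - p) ^ t‖ * ‖1 - p‖ := norm_mul_le _ _
    _ ≤ C * γ ^ t * ‖1 - p‖ := by gcongr; exact hbound t
    _ = C * ‖1 - p‖ * γ ^ t := by ring

end NormedRing

section LinftyOpNorm

attribute [local instance] Matrix.linftyOpSeminormedAddCommGroup

theorem Matrix.norm_entry_le_linfty_opNorm {m n α : Type*} [Fintype m] [Fintype n]
    [SeminormedAddCommGroup α] (A : Matrix m n α) (i : m) (j : n) : ‖A i j‖ ≤ ‖A‖ := by
  rw [linfty_opNorm_def, ← coe_nnnorm, NNReal.coe_le_coe]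
  exact (single_le_sum (f := fun j => ‖A i j‖₊) (fun _ _ => zero_le) (mem_univ j)).trans
    (le_sup (f := fun i => ∑ j, ‖A i j‖₊) (mem_univ i))

end LinftyOpNorm

theorem stmt14_general {n : Type*} [Fintype n] [DecidableEq n]
    (M Plim : Matrix n n ℝ)
    (hconv : Filter.Tendsto (fun t : ℕ => M ^ t) Filter.atTop (nhds Plim)) :
    ∃ C γ : ℝ, 0 ≤ C ∧ 0 < γ ∧ γ < 1 ∧
      ∀ t : ℕ, ∀ i j, |(M ^ t - Plim) i j| ≤ C * γ ^ t := by
  let _ : NormedRing (Matrix n n ℝ) := Matrix.linftyOpNormedRing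
  obtain ⟨C, γ, hC, hγ0, hγ1, hbound⟩ := exists_norm_pow_sub_le_geometric_of_tendsto_pow hconv
  exact ⟨C, γ, hC, hγ0, hγ1, fun t i j =>
    (Matrix.norm_entry_le_linfty_opNorm (M ^ t - Plim) i j).trans (hbound t)⟩

/-- Geometric convergence of matrix powers to their limit (the Perron–Frobenius-type estimate):
if `M ^ t` converges entrywise to `Plim`, then the convergence is geometrically fast. -/
theorem stmt14 {n : Type*} [Fintype n] [DecidableEq n] [Nonempty n]
    (M Plim : Matrix n n ℝ)
    (hconv : Filter.Tendsto (fun t : ℕ => M ^ t) Filter.atTop (nhds Plim)) :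
    ∃ C γ : ℝ, 0 ≤ C ∧ 0 < γ ∧ γ < 1 ∧
      ∀ t : ℕ, ∀ i j, |(M ^ t - Plim) i j| ≤ C * γ ^ t :=
  stmt14_general M Plim hconv
end

section
/- Let S be a nonempty finite type, let B_1, …, B_K and P_sys be row-stochastic real matrices indexed by S × S, set Q := B_1 · B_2 ⋯ B_K · P_sys, let ρ : S → ℝ, and suppose Q^t converges entrywise as t → ∞ to the matrix whose (s, s') entry is ρ(s') (all rows equal to ρ). Then for all vectors c_1, …, c_K : S → ℝ and every s ∈ S, lim_{T→∞} (1/T) Σ_{t=0}^{T−1} ( Q^t ( Σ_{ℓ=1}^K B_1 ⋯ B_{ℓ−1} c_ℓ ) )(s) = Σ_{ℓ=1}^K Σ_{s' ∈ S} (ρᵀ B_1 ⋯ B_{ℓ−1})(s') c_ℓ(s'), where the empty matrix product is the identity. (The long-run average per-period reward of an atomic policy equals the sum over atomic steps of the per-step stationary average rewards, ĝ_π̂ = Σ_{ℓ=1}^K ĝ_{ℓ,π̂}, the identity established in the proof of Proposition 1.) -/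
open Filter Finset Matrix

open Topology

namespace Matrix

variable {ι m n R : Type*} [Fintype n]

theorem tendsto_mulVec_apply_of_tendsto_const_rows [NonUnitalNonAssocSemiring R]
    [TopologicalSpace R] [IsTopologicalSemiring R]
    {l : Filter ι} {A : ι → Matrix m n R} {ρ : n → R} (hA : Tendsto A l (𝓝 (of fun _ => ρ)))
    (w : n → R) (s : m) : Tendsto (fun i => (A i *ᵥ w) s) l (𝓝 (ρ ⬝ᵥ w)) :=
  (((continuous_apply s).comp (continuous_id.matrix_mulVec continuous_const)).tendsto _).comp hA

theorem dotProduct_sum_mulVec [Fintype m] [NonUnitalSemiring R] (ρ : m → R) (s : Finset ι) (P : ι → Matrix m n R)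
    (c : ι → n → R) :
    ρ ⬝ᵥ ∑ i ∈ s, P i *ᵥ c i = ∑ i ∈ s, (ρ ᵥ* P i) ⬝ᵥ c i := by
  simp only [dotProduct_sum, dotProduct_mulVec]

end Matrix

theorem stmt15_general {S : Type*} [Fintype S] [DecidableEq S]
    (K : ℕ) (B : ℕ → Matrix S S ℝ)
    (Psys : Matrix S S ℝ) (ρ : S → ℝ)
    (hconv : Filter.Tendsto (fun t : ℕ => (((List.range K).map B).prod * Psys) ^ t)
      Filter.atTop (nhds (Matrix.of fun _ s' => ρ s'))) :
    ∀ c : ℕ → S → ℝ, ∀ s : S,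
      Filter.Tendsto
        (fun T : ℕ => (T : ℝ)⁻¹ * ∑ t ∈ Finset.range T,
          (((((List.range K).map B).prod * Psys) ^ t) *ᵥ
            fun u => ∑ ℓ ∈ Finset.range K, ((((List.range ℓ).map B).prod) *ᵥ c ℓ) u) s)
        Filter.atTop
        (nhds (∑ ℓ ∈ Finset.range K, ∑ s',
          (ρ ᵥ* ((List.range ℓ).map B).prod) s' * c ℓ s')) := by
  intro c s
  have hlim := dotProduct_sum_mulVec ρ (Finset.range K) (fun ℓ => ((List.range ℓ).map B).prod) c
  simp only [dotProduct, Finset.sum_apply] at hlim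
  rw [← hlim]
  exact (tendsto_mulVec_apply_of_tendsto_const_rows hconv _ s).cesaro

/-- The long-run average per-period reward of an atomic policy equals the sum over atomic steps
of the per-step stationary average rewards (`ĝ_π̂ = Σ_{ℓ} ĝ_{ℓ,π̂}`): here
`Q = B 0 * ⋯ * B (K-1) * Psys` and the `ℓ`-th per-step reward is weighted by the prefix product
`B 0 * ⋯ * B (ℓ-1)`. -/
theorem stmt15 {S : Type*} [Fintype S] [DecidableEq S] [Nonempty S]
    (K : ℕ) (hK : 1 ≤ K) (B : ℕ → Matrix S S ℝ) (hB : ∀ ℓ, ℓ < K → RowStochastic (B ℓ))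
    (Psys : Matrix S S ℝ) (hPsys : RowStochastic Psys) (ρ : S → ℝ)
    (hconv : Filter.Tendsto (fun t : ℕ => (((List.range K).map B).prod * Psys) ^ t)
      Filter.atTop (nhds (Matrix.of fun _ s' => ρ s'))) :
    ∀ c : ℕ → S → ℝ, ∀ s : S,
      Filter.Tendsto
        (fun T : ℕ => (T : ℝ)⁻¹ * ∑ t ∈ Finset.range T,
          (((((List.range K).map B).prod * Psys) ^ t) *ᵥ
            fun u => ∑ ℓ ∈ Finset.range K, ((((List.range ℓ).map B).prod) *ᵥ c ℓ) u) s)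
        Filter.atTop
        (nhds (∑ ℓ ∈ Finset.range K, ∑ s',
          (ρ ᵥ* ((List.range ℓ).map B).prod) s' * c ℓ s')) :=
  stmt15_general K B Psys ρ hconv
end
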